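/- arXiv:1509.09264 — 10 statements merged into one kernel-verified Lean document; each statement's English description precedes it below -/
import Mathlib

section
/- (Miller's theorem.) Consider a three-term homogeneous recurrence a_{-1}(k)·x_{k-1} + a_0(k)·x_k + a_1(k)·x_{k+1} = 0 for integers k ≥ 2, with real coefficients satisfying a_{-1}(k) ≠ 0 and a_1(k) ≠ 0 for all k ≥ 2. Suppose {u_k}_{k≥1} is a solution which is minimal, i.e. there exists another solution {y_k}_{k≥1} with y_k ≠ 0 for all sufficiently large k and lim_{k→∞} u_k / y_k = 0, and suppose {u_k} satisfies a normalising condition ∑_{k=1}^{M} c_k u_k = S ≠ 0 for some finite M ≥ 1 and real numbers c_1,…,c_M. Fix d ≠ 0 and for each n > max(M,1) define x^{[n]}_{n+1} = 0, x^{[n]}_{n} = d, and x^{[n]}_{k-1} = −a_{-1}(k)^{-1}·(a_0(k)·x^{[n]}_k + a_1(k)·x^{[n]}_{k+1}) for n ≥ k ≥ 2, and put S_n = ∑_{k=1}^{M} c_k x^{[n]}_k. Then for all sufficiently large n one has S_n ≠ 0, and for each fixed k ≥ 1, lim_{n→∞} S_n^{-1}·S·x^{[n]}_k = u_k. -/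
/-!
The Casoratian `u k * y (k + 1) - u (k + 1) * y k` obeys a first-order recurrence with nonzero
coefficients, so if it vanished once it would vanish from then on; `u / y` would then be eventually
constant, hence eventually `0`, and backward uniqueness would force `u = 0` on `k ≥ 1`, against
`S ≠ 0`. For large `n` the backward recursion started from `(d, 0)` at `(n, n + 1)` is therefore a
multiple of `u - (u (n + 1) / y (n + 1)) • y`, which tends to `u` pointwise because `u / y → 0`;
the normalisation by `S / S_n` cancels the multiple.
-/

open Filter Topology

namespace ThreeTermRecurrence

variable {am a0 a1 x z : ℕ → ℝ} {n k : ℕ}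

def RecurrenceAt (am a0 a1 x : ℕ → ℝ) (k : ℕ) : Prop :=
  am k * x (k - 1) + a0 k * x k + a1 k * x (k + 1) = 0

def casoratian (x z : ℕ → ℝ) (k : ℕ) : ℝ :=
  x k * z (k + 1) - x (k + 1) * z k

theorem RecurrenceAt.sub_mul (hx : RecurrenceAt am a0 a1 x k) (hz : RecurrenceAt am a0 a1 z k)
    (b : ℝ) : RecurrenceAt am a0 a1 (fun j => x j - b * z j) k := by
  unfold RecurrenceAt at *
  linear_combination hx - b * hz

theorem recurrenceAt_of_eq_neg_inv_mul (ham : am k ≠ 0)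
    (h : x (k - 1) = -(am k)⁻¹ * (a0 k * x k + a1 k * x (k + 1))) :
    RecurrenceAt am a0 a1 x k := by
  unfold RecurrenceAt
  rw [h]
  field_simp
  ring

theorem eq_zero_of_backward (ham : ∀ k, 2 ≤ k → k ≤ n → am k ≠ 0)
    (hx : ∀ k, 2 ≤ k → k ≤ n → RecurrenceAt am a0 a1 x k) (hn : x n = 0) (hn1 : x (n + 1) = 0)
    (hk : 1 ≤ k) (hkn : k ≤ n) : x k = 0 := by
  revert hk
  suffices h : 1 ≤ k → x k = 0 ∧ x (k + 1) = 0 from fun hk => (h hk).1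
  induction hkn using Nat.decreasingInduction with
  | self => exact fun _ => ⟨hn, hn1⟩
  | of_succ k hkn ih =>
    intro hk
    obtain ⟨h1, h2⟩ := ih (by omega)
    have hrec := hx (k + 1) (by omega) (by omega)
    simp only [RecurrenceAt, Nat.add_sub_cancel, h1, h2, mul_zero, add_zero] at hrec
    exact ⟨(mul_eq_zero.mp hrec).resolve_left (ham (k + 1) (by omega) (by omega)), h1⟩

theorem eq_div_mul_of_backward (ham : ∀ k, 2 ≤ k → k ≤ n → am k ≠ 0)
    (hx : ∀ k, 2 ≤ k → k ≤ n → RecurrenceAt am a0 a1 x k)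
    (hz : ∀ k, 2 ≤ k → k ≤ n → RecurrenceAt am a0 a1 z k)
    (hx1 : x (n + 1) = 0) (hz1 : z (n + 1) = 0) (hzn : z n ≠ 0) (hk : 1 ≤ k) (hkn : k ≤ n) :
    x k = x n / z n * z k := by
  have hdiff := eq_zero_of_backward (x := fun j => x j - x n / z n * z j) ham
    (fun j hj hjn => (hx j hj hjn).sub_mul (hz j hj hjn) _) (by field_simp; ring)
    (by simp [hx1, hz1]) hk hkn
  exact sub_eq_zero.mp hdiff

theorem casoratian_succ (hx : RecurrenceAt am a0 a1 x (k + 1))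
    (hz : RecurrenceAt am a0 a1 z (k + 1)) :
    am (k + 1) * casoratian x z k = a1 (k + 1) * casoratian x z (k + 1) := by
  unfold RecurrenceAt at hx hz
  rw [Nat.add_sub_cancel] at hx hz
  unfold casoratian
  linear_combination z (k + 1) * hx - x (k + 1) * hz

theorem casoratian_eq_zero_of_le {m : ℕ} (ha1 : ∀ k, 2 ≤ k → a1 k ≠ 0)
    (hx : ∀ k, 2 ≤ k → RecurrenceAt am a0 a1 x k) (hz : ∀ k, 2 ≤ k → RecurrenceAt am a0 a1 z k)
    (hm : 1 ≤ m) (h0 : casoratian x z m = 0) (hmk : m ≤ k) : casoratian x z k = 0 := by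
  induction k, hmk using Nat.le_induction with
  | base => exact h0
  | succ k hmk ih =>
    have h := casoratian_succ (hx (k + 1) (by omega)) (hz (k + 1) (by omega))
    rw [ih, mul_zero, eq_comm, mul_eq_zero] at h
    exact h.resolve_left (ha1 (k + 1) (by omega))

theorem eventually_eq_of_tendsto_of_succ_eq {f : ℕ → ℝ} {a : ℝ}
    (hf : Tendsto f atTop (𝓝 a)) (hsucc : ∀ᶠ k in atTop, f (k + 1) = f k) :
    ∀ᶠ k in atTop, f k = a := by
  obtain ⟨N, hN⟩ := eventually_atTop.mp hsucc
  have hconst : ∀ k, N ≤ k → f k = f N := fun k hk => by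
    induction k, hk using Nat.le_induction with
    | base => rfl
    | succ k hk ih => rw [hN k hk, ih]
  have hlim : Tendsto f atTop (𝓝 (f N)) :=
    tendsto_const_nhds.congr' (eventually_atTop.mpr ⟨N, fun k hk => (hconst k hk).symm⟩)
  rw [tendsto_nhds_unique hf hlim]
  exact eventually_atTop.mpr ⟨N, hconst⟩

theorem eq_zero_of_casoratian_eq_zero {u y : ℕ → ℝ} {m : ℕ} (ham : ∀ k, 2 ≤ k → am k ≠ 0)
    (ha1 : ∀ k, 2 ≤ k → a1 k ≠ 0) (hu : ∀ k, 2 ≤ k → RecurrenceAt am a0 a1 u k)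
    (hy : ∀ k, 2 ≤ k → RecurrenceAt am a0 a1 y k) (hyne : ∀ᶠ k in atTop, y k ≠ 0)
    (hlim : Tendsto (fun k => u k / y k) atTop (𝓝 0)) (hm : 1 ≤ m) (h0 : casoratian u y m = 0)
    (hk : 1 ≤ k) : u k = 0 := by
  have hratio : ∀ᶠ j in atTop, u (j + 1) / y (j + 1) = u j / y j := by
    filter_upwards [eventually_ge_atTop m, hyne, (tendsto_add_atTop_nat 1).eventually hyne]
      with j hmj hyj hyj1
    have hcas := casoratian_eq_zero_of_le ha1 hu hy hm h0 hmj
    unfold casoratian at hcas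
    rw [div_eq_div_iff hyj1 hyj]
    linarith
  have hzero : ∀ᶠ j in atTop, u j = 0 := by
    filter_upwards [eventually_eq_of_tendsto_of_succ_eq hlim hratio, hyne] with j hj hyj
    exact (div_eq_zero_iff.mp hj).resolve_right hyj
  obtain ⟨N, hN⟩ := eventually_atTop.mp hzero
  exact eq_zero_of_backward (n := max N k) (fun j hj _ => ham j hj) (fun j hj _ => hu j hj)
    (hN _ (le_max_left _ _)) (hN _ (by omega)) hk (le_max_right _ _)

end ThreeTermRecurrence

theorem tendsto_normalized {X w : ℕ → ℕ → ℝ} {l c u : ℕ → ℝ} {K : Set ℕ} {s : Finset ℕ}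
    (hs : ∀ k ∈ s, k ∈ K) (hX : ∀ k ∈ K, ∀ᶠ n in atTop, X n k = l n * w n k)
    (hl : ∀ᶠ n in atTop, l n ≠ 0) (hw : ∀ k ∈ K, Tendsto (fun n => w n k) atTop (𝓝 (u k)))
    (hS : ∑ j ∈ s, c j * u j ≠ 0) :
    (∀ᶠ n in atTop, ∑ j ∈ s, c j * X n j ≠ 0) ∧
      ∀ k ∈ K, Tendsto (fun n => (∑ j ∈ s, c j * X n j)⁻¹ * (∑ j ∈ s, c j * u j) * X n k)
        atTop (𝓝 (u k)) := by
  set S := ∑ j ∈ s, c j * u j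
  set W := fun n => ∑ j ∈ s, c j * w n j
  have hXs : ∀ᶠ n in atTop, ∑ j ∈ s, c j * X n j = l n * W n := by
    filter_upwards [(eventually_all_finset s).mpr fun j hj => hX j (hs j hj)] with n hn
    rw [Finset.mul_sum]
    exact Finset.sum_congr rfl fun j hj => by rw [hn j hj]; ring
  have hW : Tendsto W atTop (𝓝 S) :=
    tendsto_finsetSum s fun j hj => (hw j (hs j hj)).const_mul (c j)
  have hWne := hW.eventually_ne hS
  refine ⟨?_, fun k hk => ?_⟩
  · filter_upwards [hXs, hl, hWne] with n hXn hln hWn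
    rw [hXn]
    exact mul_ne_zero hln hWn
  · have hlim : Tendsto (fun n => S * w n k / W n) atTop (𝓝 (S * u k / S)) :=
      ((hw k hk).const_mul S).div hW hS
    rw [mul_div_cancel_left₀ _ hS] at hlim
    refine hlim.congr' ?_
    filter_upwards [hXs, hl, hWne, hX k hk] with n hXn hln hWn hXk
    rw [hXn, hXk]
    field_simp

open ThreeTermRecurrence

theorem miller_backward_recursion_general
    (am a0 a1 : ℕ → ℝ)
    (hcoef : ∀ k, 2 ≤ k → am k ≠ 0 ∧ a1 k ≠ 0)
    (u : ℕ → ℝ)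
    (hu : ∀ k, 2 ≤ k → am k * u (k - 1) + a0 k * u k + a1 k * u (k + 1) = 0)
    (hmin : ∃ y : ℕ → ℝ,
      (∀ k, 2 ≤ k → am k * y (k - 1) + a0 k * y k + a1 k * y (k + 1) = 0) ∧
      (∀ᶠ k in atTop, y k ≠ 0) ∧
      Tendsto (fun k => u k / y k) atTop (nhds 0))
    (M : ℕ) (c : ℕ → ℝ) (S : ℝ)
    (hS : S = ∑ k ∈ Finset.Icc 1 M, c k * u k) (hS0 : S ≠ 0)
    (d : ℝ) (hd : d ≠ 0)
    (X : ℕ → ℕ → ℝ)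
    (hXtop : ∀ n, max M 1 < n → X n (n + 1) = 0)
    (hXn : ∀ n, max M 1 < n → X n n = d)
    (hXrec : ∀ n, max M 1 < n → ∀ k, 2 ≤ k → k ≤ n →
      X n (k - 1) = -(am k)⁻¹ * (a0 k * X n k + a1 k * X n (k + 1)))
    (Sn : ℕ → ℝ) (hSn : ∀ n, Sn n = ∑ k ∈ Finset.Icc 1 M, c k * X n k) :
    (∀ᶠ n in atTop, Sn n ≠ 0) ∧
    ∀ k, 1 ≤ k → Tendsto (fun n => (Sn n)⁻¹ * S * X n k) atTop (nhds (u k)) := by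
  obtain ⟨y, hy, hyne, hylim⟩ := hmin
  have ham : ∀ k, 2 ≤ k → am k ≠ 0 := fun k hk => (hcoef k hk).1
  have ha1 : ∀ k, 2 ≤ k → a1 k ≠ 0 := fun k hk => (hcoef k hk).2
  have hcas : ∀ m, 1 ≤ m → casoratian u y m ≠ 0 := fun m hm h0 => hS0 <| by
    rw [hS]
    refine Finset.sum_eq_zero fun k hk => ?_
    rw [eq_zero_of_casoratian_eq_zero ham ha1 hu hy hyne hylim hm h0 (Finset.mem_Icc.mp hk).1,
      mul_zero]
  set w : ℕ → ℕ → ℝ := fun n k => u k - u (n + 1) / y (n + 1) * y k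
  have hw_top : ∀ᶠ n in atTop, w n (n + 1) = 0 ∧ w n n ≠ 0 := by
    filter_upwards [(tendsto_add_atTop_nat 1).eventually hyne, eventually_ge_atTop 1]
      with n hyn1 hn
    have hwn : w n n = casoratian u y n / y (n + 1) := by
      simp only [w, casoratian]
      field_simp
    exact ⟨by simp [w, hyn1], hwn ▸ div_ne_zero (hcas n hn) hyn1⟩
  have hX : ∀ k ∈ Set.Ici 1, ∀ᶠ n in atTop, X n k = d / w n n * w n k := fun k hk => by
    filter_upwards [hw_top, eventually_gt_atTop (max M 1), eventually_ge_atTop k]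
      with n ⟨hwn1, hwn⟩ hn hkn
    rw [← hXn n hn]
    exact eq_div_mul_of_backward (fun j hj _ => ham j hj)
      (fun j hj hjn => recurrenceAt_of_eq_neg_inv_mul (ham j hj) (hXrec n hn j hj hjn))
      (fun j hj _ => RecurrenceAt.sub_mul (hu j hj) (hy j hj) _) (hXtop n hn) hwn1 hwn hk hkn
  have hw : ∀ k ∈ Set.Ici 1, Tendsto (fun n => w n k) atTop (𝓝 (u k)) := fun k _ => by
    simpa using tendsto_const_nhds.sub ((hylim.comp (tendsto_add_atTop_nat 1)).mul_const (y k))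
  obtain rfl : Sn = _ := funext hSn
  subst hS
  exact tendsto_normalized (fun k hk => (Finset.mem_Icc.mp hk).1) hX
    (hw_top.mono fun n h => div_ne_zero hd h.2) hw hS0

/-- Miller's theorem: for a three-term homogeneous recurrence with a
minimal solution `u` satisfying a normalising condition, the Miller backward recursion
values `X n k`, after normalisation, converge to `u k` as `n → ∞`. -/
theorem miller_backward_recursion
    (am a0 a1 : ℕ → ℝ)
    (hcoef : ∀ k, 2 ≤ k → am k ≠ 0 ∧ a1 k ≠ 0)
    (u : ℕ → ℝ)
    (hu : ∀ k, 2 ≤ k → am k * u (k - 1) + a0 k * u k + a1 k * u (k + 1) = 0)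
    (hmin : ∃ y : ℕ → ℝ,
      (∀ k, 2 ≤ k → am k * y (k - 1) + a0 k * y k + a1 k * y (k + 1) = 0) ∧
      (∀ᶠ k in atTop, y k ≠ 0) ∧
      Tendsto (fun k => u k / y k) atTop (nhds 0))
    (M : ℕ) (hM : 1 ≤ M) (c : ℕ → ℝ) (S : ℝ)
    (hS : S = ∑ k ∈ Finset.Icc 1 M, c k * u k) (hS0 : S ≠ 0)
    (d : ℝ) (hd : d ≠ 0)
    (X : ℕ → ℕ → ℝ)
    (hXtop : ∀ n, max M 1 < n → X n (n + 1) = 0)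
    (hXn : ∀ n, max M 1 < n → X n n = d)
    (hXrec : ∀ n, max M 1 < n → ∀ k, 2 ≤ k → k ≤ n →
      X n (k - 1) = -(am k)⁻¹ * (a0 k * X n k + a1 k * X n (k + 1)))
    (Sn : ℕ → ℝ) (hSn : ∀ n, Sn n = ∑ k ∈ Finset.Icc 1 M, c k * X n k) :
    (∀ᶠ n in atTop, Sn n ≠ 0) ∧
    ∀ k, 1 ≤ k → Tendsto (fun n => (Sn n)⁻¹ * S * X n k) atTop (nhds (u k)) :=
  miller_backward_recursion_general am a0 a1 hcoef u hu hmin M c S hS hS0 d hd X hXtop hXn hXrec Sn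
    hSn
end

section
/- Let A ∈ ℝ^{n×n} be a non-singular tridiagonal matrix such that a_{k,k-1} ≠ 0 and a_{k-1,k} ≠ 0 for 1 < k ≤ n. If a matrix X ∈ ℝ^{n×n} satisfies the system of matrix equations XA = D and AX = H, where D and H are diagonal matrices with h_{1,1} = h_{n,n} = 1, then D = H = I and consequently X = A⁻¹. -/
/-- If `A` is a non-singular tridiagonal matrix with nonzero sub- and
super-diagonal entries, and `X` satisfies `X*A = D`, `A*X = H` with `D`, `H` diagonal
and `H₁₁ = Hₙₙ = 1`, then `D = H = I` and `X = A⁻¹`. -/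
theorem inverse_from_two_diagonal_equations {n : ℕ} (hn : 0 < n)
    (A : Matrix (Fin n) (Fin n) ℝ)
    (htri : ∀ i j : Fin n, ((i : ℕ) + 1 < (j : ℕ) ∨ (j : ℕ) + 1 < (i : ℕ)) → A i j = 0)
    (hdet : IsUnit A.det)
    (hoff : ∀ i j : Fin n, (i : ℕ) = (j : ℕ) + 1 → A i j ≠ 0 ∧ A j i ≠ 0)
    (X D H : Matrix (Fin n) (Fin n) ℝ)
    (hD : D.IsDiag) (hH : H.IsDiag)
    (hXA : X * A = D) (hAX : A * X = H)
    (hH1 : H ⟨0, hn⟩ ⟨0, hn⟩ = 1)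
    (hHn : H ⟨n - 1, by omega⟩ ⟨n - 1, by omega⟩ = 1) :
    D = 1 ∧ H = 1 ∧ X = A⁻¹ := by
  have hHA : H * A = A * D := by
    rw [← hAX, ← hXA, Matrix.mul_assoc]
  have key : ∀ i j : Fin n, H i i * A i j = A i j * D j j := by
    intro i j
    have h1 := congrFun (congrFun hHA i) j
    rw [← hH.diagonal_diag, ← hD.diagonal_diag] at h1
    simpa [Matrix.diagonal_mul, Matrix.mul_diagonal, Matrix.diag] using h1
  have sub : ∀ k (hk : k + 1 < n),
      H ⟨k+1, hk⟩ ⟨k+1, hk⟩ = D ⟨k, Nat.lt_of_succ_lt hk⟩ ⟨k, Nat.lt_of_succ_lt hk⟩ := by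
    intro k hk
    have hA := (hoff ⟨k+1, hk⟩ ⟨k, Nat.lt_of_succ_lt hk⟩ rfl).1
    have h1 := key ⟨k+1, hk⟩ ⟨k, Nat.lt_of_succ_lt hk⟩
    rw [mul_comm] at h1
    exact mul_left_cancel₀ hA h1
  have sup : ∀ k (hk : k + 1 < n),
      H ⟨k, Nat.lt_of_succ_lt hk⟩ ⟨k, Nat.lt_of_succ_lt hk⟩ = D ⟨k+1, hk⟩ ⟨k+1, hk⟩ := by
    intro k hk
    have hA := (hoff ⟨k+1, hk⟩ ⟨k, Nat.lt_of_succ_lt hk⟩ rfl).2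
    have h1 := key ⟨k, Nat.lt_of_succ_lt hk⟩ ⟨k+1, hk⟩
    rw [mul_comm] at h1
    exact mul_left_cancel₀ hA h1
  have ht : Matrix.trace H = Matrix.trace D := by
    rw [← hAX, ← hXA, Matrix.trace_mul_comm]
  by_cases hone : n = 1
  · subst hone
    have hH1' : H = 1 := by
      ext i j
      have hi : i = ⟨0, hn⟩ := Subsingleton.elim _ _
      have hj : j = ⟨0, hn⟩ := Subsingleton.elim _ _
      subst hi hj
      simpa using hH1
    have hD1 : D = 1 := by
      rw [hH1'] at ht
      ext i j
      have hi : i = ⟨0, hn⟩ := Subsingleton.elim _ _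
      have hj : j = ⟨0, hn⟩ := Subsingleton.elim _ _
      subst hi hj
      simp [Matrix.trace, Matrix.diag, Fin.sum_univ_one] at ht
      simpa using ht.symm
    refine ⟨hD1, hH1', ?_⟩
    rw [hH1'] at hAX
    exact (Matrix.inv_eq_right_inv hAX).symm
  have h2 : 2 ≤ n := by omega
  set c := H ⟨1, by omega⟩ ⟨1, by omega⟩ with hc_def
  have claimH : ∀ k (hk : k < n), H ⟨k, hk⟩ ⟨k, hk⟩ = if Even k then 1 else c := by
    intro k
    induction k using Nat.strong_induction_on with
    | _ k ih =>
      intro hk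
      match k with
      | 0 => simpa using hH1
      | 1 => simp [hc_def]
      | (k+2) =>
        have e1 := sub (k+1) hk
        have e2 := sup k (by omega)
        rw [e1, ← e2, ih k (by omega) (by omega)]
        simp [Nat.even_add_one]
  have claimD : ∀ k (hk : k < n), D ⟨k, hk⟩ ⟨k, hk⟩ = if Even k then c else 1 := by
    intro k hk
    by_cases hk1 : k + 1 < n
    · rw [← sub k hk1, claimH (k+1) hk1]
      by_cases he : Even k <;> simp [Nat.even_add_one, he]
    · obtain ⟨m, rfl⟩ : ∃ m, k = m + 1 := ⟨k - 1, by omega⟩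
      rw [← sup m hk, claimH m (by omega)]
      by_cases he : Even m <;> simp [Nat.even_add_one, he]
  have hc : c = 1 := by
    rcases Nat.even_or_odd n with he | ho
    · have hnodd : ¬ Even (n - 1) := by
        rcases he with ⟨m, hm⟩; rintro ⟨p, hp⟩; omega
      have := claimH (n-1) (by omega)
      rw [if_neg hnodd] at this
      rw [← this]; exact hHn
    · have htsum : ∑ i : Fin n, H i i = ∑ i : Fin n, D i i := by
        simpa [Matrix.trace, Matrix.diag] using ht
      have hsum : ∑ i : Fin n, ((if Even (i:ℕ) then (1:ℝ) else c) - (if Even (i:ℕ) then c else 1)) = 0 := by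
        rw [Finset.sum_sub_distrib]
        have e1 : ∑ i : Fin n, (if Even (i:ℕ) then (1:ℝ) else c) = ∑ i : Fin n, H i i := by
          refine Finset.sum_congr rfl fun i _ => ?_
          rw [claimH i.1 i.2]
        have e2 : ∑ i : Fin n, (if Even (i:ℕ) then c else (1:ℝ)) = ∑ i : Fin n, D i i := by
          refine Finset.sum_congr rfl fun i _ => ?_
          rw [claimD i.1 i.2]
        rw [e1, e2, htsum, sub_self]
      have hpt : ∀ i : Fin n, ((if Even (i:ℕ) then (1:ℝ) else c) - (if Even (i:ℕ) then c else 1))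
          = (1 - c) * (-1) ^ (i : ℕ) := by
        intro i
        by_cases hi : Even (i:ℕ)
        · rw [if_pos hi, if_pos hi, hi.neg_one_pow]; ring
        · rw [if_neg hi, if_neg hi, (Nat.not_even_iff_odd.mp hi).neg_one_pow]; ring
      rw [Finset.sum_congr rfl (fun i _ => hpt i), ← Finset.mul_sum,
        Fin.sum_univ_eq_sum_range (fun i => ((-1:ℝ)) ^ i) n, neg_one_geom_sum,
        if_neg (Nat.not_even_iff_odd.mpr ho)] at hsum
      have : (1:ℝ) - c = 0 := by simpa using hsum
      linarith
  have hH1' : H = 1 := by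
    ext i j
    by_cases hij : i = j
    · subst hij
      have := claimH i.1 i.2
      simp only [Fin.eta] at this
      rw [this]
      by_cases hi : Even (i:ℕ) <;> simp [hi, hc, Matrix.one_apply_eq]
    · rw [hH hij, Matrix.one_apply_ne hij]
  have hD1' : D = 1 := by
    ext i j
    by_cases hij : i = j
    · subst hij
      have := claimD i.1 i.2
      simp only [Fin.eta] at this
      rw [this]
      by_cases hi : Even (i:ℕ) <;> simp [hi, hc, Matrix.one_apply_eq]
    · rw [hD hij, Matrix.one_apply_ne hij]
  refine ⟨hD1', hH1', ?_⟩
  rw [hH1'] at hAX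
  exact (Matrix.inv_eq_right_inv hAX).symm
end

section
/- (Lewis's lemma.) Let A ∈ ℝ^{n×n} be an invertible tridiagonal matrix such that a_{k,k+1} ≠ 0 for k = 1, 2, …, n−1, and let X = A⁻¹. Then for all 1 ≤ k < n and 1 ≤ j ≤ n−k, the symmetric relation x_{k+j,k} = (∏_{i=k}^{k+j−1} a_{i+1,i}/a_{i,i+1}) · x_{k,k+j} holds. -/
open Finset

/-! Fix `k` and let `u i = x i k` (column `k` of `X = A⁻¹`) and `v i = x k i` (row `k`).
For `i > k`, row `i` of `A X = I` and column `i` of `X A = I` give three-term recurrences for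
`u` and `v`, and rescaling `v` by the partial products of `a (i+1) i / a i (i+1)` turns the
recurrence of `v` into that of `u`. Since the superdiagonal is nonzero, such a recurrence is
determined by two consecutive values: `u k = v k`, and `a k (k+1) * u (k+1) = a (k+1) k * v (k+1)`
follows by telescoping the diagonal entries of `A X = X A` from the top left corner. -/

theorem eq_zero_of_threeTermRecurrence {R : Type*} [Ring R] [NoZeroDivisors R]
    (c d e z : ℕ → R) (k N : ℕ)
    (he : ∀ i, k ≤ i → i + 2 < N → e i ≠ 0)
    (hrec : ∀ i, k ≤ i → i + 2 < N → c i * z i + d i * z (i + 1) + e i * z (i + 2) = 0)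
    (h₀ : z k = 0) (h₁ : k + 1 < N → z (k + 1) = 0) :
    ∀ j, k + j < N → z (k + j) = 0 := by
  intro j
  induction j using Nat.twoStepInduction with
  | zero => exact fun _ => h₀
  | one => exact h₁
  | more j ih₀ ih₁ =>
    intro hj
    have h := hrec (k + j) (by omega) (by omega)
    have hz₀ : z (k + j) = 0 := ih₀ (by omega)
    have hz₁ : z (k + j + 1) = 0 := ih₁ (by omega)
    rw [hz₀, hz₁, mul_zero, mul_zero, zero_add, zero_add] at h
    exact (mul_eq_zero.1 h).resolve_left (he _ (by omega) (by omega))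

theorem Finset.prod_Ico_succ_div_mul {K : Type*} [Field K] (f g : ℕ → K) {k i : ℕ}
    (hki : k ≤ i) (hg : g i ≠ 0) :
    (∏ m ∈ Ico k (i + 1), f m / g m) * g i = (∏ m ∈ Ico k i, f m / g m) * f i := by
  rw [prod_Ico_succ_top hki, mul_assoc, div_mul_cancel₀ _ hg]

namespace Matrix

variable {R : Type*} {n : ℕ}

/-- Extending the entries by zero makes the first and last rows of a tridiagonal product obey
the same three-term formula as the others. -/
def natEntry [Zero R] (M : Matrix (Fin n) (Fin n) R) (i j : ℕ) : R :=
  if h : i < n ∧ j < n then M ⟨i, h.1⟩ ⟨j, h.2⟩ else 0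

section natEntry

variable [Zero R]

@[simp]
theorem natEntry_coe (M : Matrix (Fin n) (Fin n) R) (i j : Fin n) :
    M.natEntry i j = M i j := by
  simp [natEntry]

theorem natEntry_of_le_left (M : Matrix (Fin n) (Fin n) R) {i : ℕ} (j : ℕ) (hi : n ≤ i) :
    M.natEntry i j = 0 :=
  dif_neg fun h => by omega

theorem natEntry_of_le_right (M : Matrix (Fin n) (Fin n) R) (i : ℕ) {j : ℕ} (hj : n ≤ j) :
    M.natEntry i j = 0 :=
  dif_neg fun h => by omega

theorem natEntry_eq_of_forall {M : Matrix (Fin n) (Fin n) R} {f : ℕ → ℕ → R}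
    (h : ∀ i j : Fin n, M i j = f i j) : ∀ ⦃i j : ℕ⦄, i < n → j < n → M.natEntry i j = f i j :=
  fun i j hi hj => (natEntry_coe M ⟨i, hi⟩ ⟨j, hj⟩).trans (h _ _)

theorem natEntry_transpose (M : Matrix (Fin n) (Fin n) R) (i j : ℕ) :
    Mᵀ.natEntry i j = M.natEntry j i := by
  unfold natEntry
  by_cases h : i < n ∧ j < n
  · rw [dif_pos h, dif_pos ⟨h.2, h.1⟩, transpose_apply]
  · rw [dif_neg h, dif_neg fun h' => h ⟨h'.2, h'.1⟩]

theorem natEntry_one_of_ne [One R] {i j : ℕ} (h : i ≠ j) :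
    (1 : Matrix (Fin n) (Fin n) R).natEntry i j = 0 := by
  unfold natEntry
  split_ifs with hij
  · exact one_apply_ne fun e => h (congrArg Fin.val e)
  · rfl

end natEntry

theorem natEntry_mul [NonUnitalNonAssocSemiring R] (A B : Matrix (Fin n) (Fin n) R) (i j : ℕ) :
    (A * B).natEntry i j = ∑ m ∈ range n, A.natEntry i m * B.natEntry m j := by
  by_cases h : i < n ∧ j < n
  · rw [natEntry, dif_pos h, mul_apply, ← Fin.sum_univ_eq_sum_range]
    refine sum_congr rfl fun m _ => ?_
    simp [natEntry, h.1, h.2]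
  · rcases not_and_or.1 h with hi | hj
    · simp [natEntry_of_le_left _ _ (not_lt.1 hi)]
    · simp [natEntry_of_le_right _ _ (not_lt.1 hj)]

def IsTridiag [Zero R] (A : Matrix (Fin n) (Fin n) R) : Prop :=
  ∀ i j : Fin n, ((i : ℕ) + 1 < (j : ℕ) ∨ (j : ℕ) + 1 < (i : ℕ)) → A i j = 0

namespace IsTridiag

section Semiring

variable [NonUnitalNonAssocSemiring R] {A : Matrix (Fin n) (Fin n) R}

theorem transpose (hA : A.IsTridiag) : Aᵀ.IsTridiag :=
  fun i j h => hA j i h.symm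

theorem natEntry_eq_zero (hA : A.IsTridiag) {i j : ℕ} (h : i + 1 < j ∨ j + 1 < i) :
    A.natEntry i j = 0 := by
  by_cases hij : i < n ∧ j < n
  · exact (natEntry_coe A ⟨i, hij.1⟩ ⟨j, hij.2⟩).trans (hA _ _ h)
  · exact dif_neg hij

theorem natEntry_mul (hA : A.IsTridiag) (B : Matrix (Fin n) (Fin n) R) (i j : ℕ) :
    (A * B).natEntry i j = ∑ m ∈ Icc (i - 1) (i + 1), A.natEntry i m * B.natEntry m j := by
  rw [Matrix.natEntry_mul]
  calc ∑ m ∈ range n, A.natEntry i m * B.natEntry m j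
      = ∑ m ∈ range (n + i + 2), A.natEntry i m * B.natEntry m j := by
        refine sum_subset (range_subset_range.2 (by omega)) fun m _ hm => ?_
        rw [natEntry_of_le_right A i (by simpa using hm), zero_mul]
    _ = ∑ m ∈ Icc (i - 1) (i + 1), A.natEntry i m * B.natEntry m j := by
        refine (sum_subset (fun m hm => ?_) fun m _ hm => ?_).symm
        · simp only [mem_Icc] at hm; simp only [mem_range]; omega
        · rw [hA.natEntry_eq_zero (by simp only [mem_Icc] at hm; omega), zero_mul]

theorem natEntry_mul_zero (hA : A.IsTridiag) (B : Matrix (Fin n) (Fin n) R) (j : ℕ) :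
    (A * B).natEntry 0 j = A.natEntry 0 0 * B.natEntry 0 j + A.natEntry 0 1 * B.natEntry 1 j := by
  rw [hA.natEntry_mul, Nat.zero_sub, zero_add, sum_Icc_succ_top (by omega), Icc_self,
    sum_singleton]

theorem natEntry_mul_succ (hA : A.IsTridiag) (B : Matrix (Fin n) (Fin n) R) (i j : ℕ) :
    (A * B).natEntry (i + 1) j = A.natEntry (i + 1) i * B.natEntry i j
      + A.natEntry (i + 1) (i + 1) * B.natEntry (i + 1) j
      + A.natEntry (i + 1) (i + 2) * B.natEntry (i + 2) j := by
  rw [hA.natEntry_mul, Nat.add_sub_cancel, sum_Icc_succ_top (by omega),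
    sum_Icc_succ_top (by omega), Icc_self, sum_singleton]

end Semiring

theorem natEntry_mul_natEntry_succ_of_commute {R : Type*} [CommRing R]
    {A X : Matrix (Fin n) (Fin n) R} (hA : A.IsTridiag) (h : Commute A X) (k : ℕ) :
    A.natEntry k (k + 1) * X.natEntry (k + 1) k = A.natEntry (k + 1) k * X.natEntry k (k + 1) := by
  have hdiag : ∀ i, (A * X).natEntry i i = (Aᵀ * Xᵀ).natEntry i i := fun i => by
    rw [← transpose_mul, ← h.eq, natEntry_transpose]
  induction k with
  | zero =>
    have h₀ := hdiag 0
    rw [hA.natEntry_mul_zero, hA.transpose.natEntry_mul_zero] at h₀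
    simp only [natEntry_transpose] at h₀
    linear_combination h₀
  | succ k ih =>
    have h₁ := hdiag (k + 1)
    rw [hA.natEntry_mul_succ, hA.transpose.natEntry_mul_succ] at h₁
    simp only [natEntry_transpose] at h₁
    linear_combination ih + h₁

theorem natEntry_inv_eq_prod_mul {K : Type*} [Field K] {A : Matrix (Fin n) (Fin n) K}
    (hA : A.IsTridiag) (hdet : IsUnit A.det)
    (hsup : ∀ i, i + 1 < n → A.natEntry i (i + 1) ≠ 0) {k j : ℕ} (hkj : k + j < n) :
    A⁻¹.natEntry (k + j) k
      = (∏ i ∈ Ico k (k + j), A.natEntry (i + 1) i / A.natEntry i (i + 1)) * A⁻¹.natEntry k (k + j) := by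
  set a := A.natEntry
  set x := A⁻¹.natEntry
  set P : ℕ → K := fun i => ∏ m ∈ Ico k i, a (m + 1) m / a m (m + 1) with hP
  have hAX : ∀ i, k ≤ i → (A * A⁻¹).natEntry (i + 1) k = 0 := fun i hi => by
    rw [mul_nonsing_inv _ hdet, natEntry_one_of_ne (by omega)]
  have hXA : ∀ i, k ≤ i → (Aᵀ * A⁻¹ᵀ).natEntry (i + 1) k = 0 := fun i hi => by
    rw [← transpose_mul, nonsing_inv_mul _ hdet, transpose_one, natEntry_one_of_ne (by omega)]
  have hcomm : Commute A A⁻¹ := (mul_nonsing_inv A hdet).trans (nonsing_inv_mul A hdet).symm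
  refine sub_eq_zero.1 (eq_zero_of_threeTermRecurrence (fun i => a (i + 1) i)
    (fun i => a (i + 1) (i + 1)) (fun i => a (i + 1) (i + 2)) (fun i => x i k - P i * x k i) k n
    (fun i _ hi => hsup (i + 1) (by omega)) (fun i hki _ => ?_) (by simp [hP]) (fun hk => ?_) j hkj)
  · have hcol := hAX i hki
    have hrow := hXA i hki
    rw [hA.natEntry_mul_succ] at hcol
    rw [hA.transpose.natEntry_mul_succ] at hrow
    simp only [natEntry_transpose] at hrow
    have hP₁ := prod_Ico_succ_div_mul (fun m => a (m + 1) m) (fun m => a m (m + 1)) hki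
      (hsup i (by omega))
    have hP₂ := prod_Ico_succ_div_mul (fun m => a (m + 1) m) (fun m => a m (m + 1))
      (by omega : k ≤ i + 1) (hsup (i + 1) (by omega))
    simp only [hP]
    linear_combination hcol - P (i + 1) * hrow + x k i * hP₁ - x k (i + 2) * hP₂
  · simp only [hP]
    rw [prod_Ico_succ_top le_rfl, Ico_self, prod_empty, one_mul, sub_eq_zero, div_mul_eq_mul_div,
      eq_div_iff (hsup k hk)]
    linear_combination hA.natEntry_mul_natEntry_succ_of_commute hcomm k

end IsTridiag

end Matrix

/-- Lewis's lemma: if `A` is an invertible tridiagonal matrix with nonzero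
superdiagonal, then the entries of `X = A⁻¹` satisfy the symmetry relation
`x (k+j) k = (∏_{i=k}^{k+j-1} a (i+1) i / a i (i+1)) * x k (k+j)`.
Here `a`, `x` are the (0-based) entry functions of `A` and `A⁻¹`. -/
theorem lewis_lemma {n : ℕ}
    (A : Matrix (Fin n) (Fin n) ℝ) (a x : ℕ → ℕ → ℝ)
    (hAa : ∀ i j : Fin n, A i j = a (i : ℕ) (j : ℕ))
    (hXx : ∀ i j : Fin n, A⁻¹ i j = x (i : ℕ) (j : ℕ))
    (htri : ∀ i j : Fin n, ((i : ℕ) + 1 < (j : ℕ) ∨ (j : ℕ) + 1 < (i : ℕ)) → A i j = 0)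
    (hdet : IsUnit A.det)
    (hsup : ∀ k : ℕ, k + 1 < n → a k (k + 1) ≠ 0) :
    ∀ k j : ℕ, 1 ≤ j → k + j < n →
      x (k + j) k = (∏ i ∈ Finset.Ico k (k + j), a (i + 1) i / a i (i + 1)) * x k (k + j) := by
  intro k j _ hkj
  have ha := Matrix.natEntry_eq_of_forall hAa
  have hx := Matrix.natEntry_eq_of_forall hXx
  have hsup' : ∀ i, i + 1 < n → A.natEntry i (i + 1) ≠ 0 := fun i hi => by
    rw [ha (by omega) hi]; exact hsup i hi
  have hprod : ∏ i ∈ Ico k (k + j), a (i + 1) i / a i (i + 1)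
      = ∏ i ∈ Ico k (k + j), A.natEntry (i + 1) i / A.natEntry i (i + 1) :=
    prod_congr rfl fun i hi => by
      rw [mem_Ico] at hi
      rw [ha (by omega) (by omega), ha (by omega) (by omega)]
  rw [← hx hkj (by omega), ← hx (by omega) hkj, hprod]
  exact Matrix.IsTridiag.natEntry_inv_eq_prod_mul htri hdet hsup' hkj
end

section
/- (Lewis's theorem.) Let A ∈ ℝ^{n×n} (n ≥ 2) be a non-singular tridiagonal matrix satisfying a_{k-1,k} ≠ 0 and a_{k,k-1} ≠ 0 for 2 ≤ k ≤ n. Define sequences {ẑ_k}, {z_k}, {e_k} by: ẑ_n = 1, ẑ_{n-1} = −a_{n,n}/a_{n-1,n}, ẑ_{k-1} = −(a_{k,k}/a_{k-1,k})·ẑ_k − (a_{k+1,k}/a_{k-1,k})·ẑ_{k+1} for n > k > 1; z_1 = 1, z_2 = −a_{1,1}/a_{2,1}, z_{k+1} = −(a_{k,k}/a_{k+1,k})·z_k − (a_{k-1,k}/a_{k+1,k})·z_{k-1} for 1 < k < n; and e_1 = 1, e_{k+1} = (a_{k+1,k}/a_{k,k+1})·e_k for 1 ≤ k < n. Then a_{1,1}ẑ_1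 + a_{2,1}ẑ_2 ≠ 0, and the inverse X = A⁻¹ satisfies: x_{1,n} = 1/(a_{1,1}ẑ_1 + a_{2,1}ẑ_2); x_{s,k} = (e_s · z_s · x_{1,n}) · ẑ_k for s ≤ k; and x_{s,k} = (e_s · ẑ_s · x_{1,n}) · z_k for s > k (1 ≤ s, k ≤ n). -/
private lemma finSumIte {n : ℕ} (c : ℕ) (f : Fin n → ℝ) :
    (∑ j : Fin n, if (j : ℕ) = c then f j else 0) =
      if h : c < n then f ⟨c, h⟩ else 0 := by
  by_cases h : c < n
  · rw [dif_pos h, Finset.sum_eq_single (⟨c, h⟩ : Fin n)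
      (fun b _ hb => if_neg fun hc => hb (Fin.ext hc))
      (fun hc => absurd (Finset.mem_univ _) hc), if_pos rfl]
  · rw [dif_neg h]
    exact Finset.sum_eq_zero fun j _ => if_neg fun hc : (j:ℕ) = c => h (hc ▸ j.isLt)

private lemma finSumItePred {n : ℕ} (c : ℕ) (hc : c < n) (f : Fin n → ℝ) :
    (∑ j : Fin n, if (j : ℕ) + 1 = c then f j else 0) =
      if 1 ≤ c then f ⟨c - 1, by omega⟩ else 0 := by
  by_cases h : 1 ≤ c
  · rw [if_pos h, Finset.sum_eq_single (⟨c - 1, by omega⟩ : Fin n)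
      (fun b _ hb => if_neg fun hc' => hb (Fin.ext (by
        have : (b : ℕ) + 1 = c := hc'
        simp only [Fin.val_mk]; omega)))
      (fun hc' => absurd (Finset.mem_univ _) hc'), if_pos (by simp only [Fin.val_mk]; omega)]
  · rw [if_neg h]
    exact Finset.sum_eq_zero fun j _ => if_neg (by omega)

/-- Lewis's theorem: closed-form formulae for the entries of the inverse of
a non-singular tridiagonal matrix with nonzero sub- and super-diagonals, in terms of the
sequences `ẑ`, `z`, `e`. Here `a i j` is the (1-based) entry `a_{i,j}` of `A` and
`x s k` is the (1-based) entry of `X = A⁻¹`. -/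
theorem lewis_theorem {n : ℕ} (hn : 2 ≤ n)
    (A : Matrix (Fin n) (Fin n) ℝ) (a x : ℕ → ℕ → ℝ)
    (hAa : ∀ i j : Fin n, A i j = a ((i : ℕ) + 1) ((j : ℕ) + 1))
    (hXx : ∀ i j : Fin n, A⁻¹ i j = x ((i : ℕ) + 1) ((j : ℕ) + 1))
    (htri : ∀ i j : Fin n, ((i : ℕ) + 1 < (j : ℕ) ∨ (j : ℕ) + 1 < (i : ℕ)) → A i j = 0)
    (hdet : IsUnit A.det)
    (hoff : ∀ k, 2 ≤ k → k ≤ n → a (k - 1) k ≠ 0 ∧ a k (k - 1) ≠ 0)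
    (zh z e : ℕ → ℝ)
    (hzh1 : zh n = 1)
    (hzh2 : zh (n - 1) = -(a n n) / a (n - 1) n)
    (hzh3 : ∀ k, 1 < k → k < n →
      zh (k - 1) = -(a k k / a (k - 1) k) * zh k - (a (k + 1) k / a (k - 1) k) * zh (k + 1))
    (hz1 : z 1 = 1)
    (hz2 : z 2 = -(a 1 1) / a 2 1)
    (hz3 : ∀ k, 1 < k → k < n →
      z (k + 1) = -(a k k / a (k + 1) k) * z k - (a (k - 1) k / a (k + 1) k) * z (k - 1))
    (he1 : e 1 = 1)
    (he2 : ∀ k, 1 ≤ k → k < n → e (k + 1) = (a (k + 1) k / a k (k + 1)) * e k) :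
    a 1 1 * zh 1 + a 2 1 * zh 2 ≠ 0 ∧
    x 1 n = (a 1 1 * zh 1 + a 2 1 * zh 2)⁻¹ ∧
    (∀ s k, 1 ≤ s → s ≤ n → 1 ≤ k → k ≤ n →
      (s ≤ k → x s k = (e s * z s * x 1 n) * zh k) ∧
      (k < s → x s k = (e s * zh s * x 1 n) * z k)) := by
  -- shifted nonzero off-diagonal facts
  have hsup : ∀ m, 1 ≤ m → m < n → a m (m+1) ≠ 0 := by
    intro m h1 h2
    have h := (hoff (m+1) (by omega) (by omega)).1
    simpa using h
  have hsub : ∀ m, 1 ≤ m → m < n → a (m+1) m ≠ 0 := by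
    intro m h1 h2
    have h := (hoff (m+1) (by omega) (by omega)).2
    simpa using h
  -- column relations for zh
  have hC1 : ∀ m, 1 ≤ m → m + 1 < n →
      a m (m+1) * zh m + a (m+1) (m+1) * zh (m+1) + a (m+1+1) (m+1) * zh (m+1+1) = 0 := by
    intro m h1 h2
    have ha := hsup m h1 (by omega)
    have h := hzh3 (m+1) (by omega) (by omega)
    simp only [Nat.add_sub_cancel] at h
    rw [h]
    field_simp
    ring
  have hC2 : a (n-1) n * zh (n-1) + a n n * zh n = 0 := by
    have ha : a (n-1) n ≠ 0 := (hoff n (by omega) (le_refl n)).1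
    rw [hzh1, hzh2]
    field_simp
    ring
  have hD1 : a 1 1 * z 1 + a 2 1 * z 2 = 0 := by
    have ha : a 2 1 ≠ 0 := by
      have := (hoff 2 (le_refl 2) hn).2; simpa using this
    rw [hz1, hz2]
    field_simp
    ring
  have hD2 : ∀ m, 1 ≤ m → m + 1 < n →
      a m (m+1) * z m + a (m+1) (m+1) * z (m+1) + a (m+1+1) (m+1) * z (m+1+1) = 0 := by
    intro m h1 h2
    have ha := hsub (m+1) (by omega) (by omega)
    have h := hz3 (m+1) (by omega) (by omega)
    simp only [Nat.add_sub_cancel] at h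
    rw [h]
    field_simp
    ring
  have hE : ∀ m, 1 ≤ m → m < n → a (m+1) m * e m = a m (m+1) * e (m+1) := by
    intro m h1 h2
    have ha := hsup m h1 h2
    rw [he2 m h1 h2]
    field_simp
  set d := a 1 1 * zh 1 + a 2 1 * zh 2 with hd_def
  -- constancy of the "Wronskian"
  have hWr : ∀ m, 1 ≤ m → m < n →
      e m * (a (m+1) m * (zh (m+1) * z m - zh m * z (m+1))) = d := by
    intro m h1
    induction m, h1 using Nat.le_induction with
    | base =>
      intro _
      have ha : a 2 1 ≠ 0 := by
        have := (hoff 2 (le_refl 2) hn).2; simpa using this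
      norm_num
      rw [he1, hz1, hz2, hd_def]
      field_simp
      ring
    | succ m h1 ih =>
      intro h2
      have hmn : m < n := by omega
      have ih' := ih hmn
      have hc1 := hC1 m h1 h2
      have hd2 := hD2 m h1 h2
      have he' := hE m h1 hmn
      linear_combination ih' - (zh (m+1) * z m - zh m * z (m+1)) * he' +
        e (m+1) * z (m+1) * hc1 - e (m+1) * zh (m+1) * hd2
  -- the candidate inverse matrix
  set Y : Matrix (Fin n) (Fin n) ℝ := Matrix.of (fun s t : Fin n =>
    if (s:ℕ) ≤ (t:ℕ) then e ((s:ℕ)+1) * z ((s:ℕ)+1) * zh ((t:ℕ)+1)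
    else e ((s:ℕ)+1) * zh ((s:ℕ)+1) * z ((t:ℕ)+1)) with hY_def
  have hYle : ∀ s t : Fin n, (s:ℕ) ≤ (t:ℕ) →
      Y s t = e ((s:ℕ)+1) * z ((s:ℕ)+1) * zh ((t:ℕ)+1) := by
    intro s t h
    rw [hY_def]; simp only [Matrix.of_apply]; rw [if_pos h]
  have hYge : ∀ s t : Fin n, (t:ℕ) ≤ (s:ℕ) →
      Y s t = e ((s:ℕ)+1) * zh ((s:ℕ)+1) * z ((t:ℕ)+1) := by
    intro s t h
    rw [hY_def]; simp only [Matrix.of_apply]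
    by_cases h' : (s:ℕ) ≤ (t:ℕ)
    · rw [if_pos h']
      have hst : (s:ℕ) = (t:ℕ) := le_antisymm h' h
      rw [hst]; ring
    · rw [if_neg h']
  have hAa' : ∀ (i : Fin n) (jv : ℕ) (hj : jv < n),
      A i ⟨jv, hj⟩ = a ((i:ℕ)+1) (jv+1) := fun i jv hj => hAa i ⟨jv, hj⟩
  have hYle' : ∀ (sv : ℕ) (hs : sv < n) (t : Fin n), sv ≤ (t:ℕ) →
      Y ⟨sv, hs⟩ t = e (sv+1) * z (sv+1) * zh ((t:ℕ)+1) :=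
    fun sv hs t h => hYle ⟨sv, hs⟩ t h
  have hYge' : ∀ (sv : ℕ) (hs : sv < n) (t : Fin n), (t:ℕ) ≤ sv →
      Y ⟨sv, hs⟩ t = e (sv+1) * zh (sv+1) * z ((t:ℕ)+1) :=
    fun sv hs t h => hYge ⟨sv, hs⟩ t h
  have hY2 : ∀ (sv tv : ℕ) (hs : sv < n) (ht : tv < n), sv ≤ tv →
      Y ⟨sv, hs⟩ ⟨tv, ht⟩ = e (sv+1) * z (sv+1) * zh (tv+1) :=
    fun sv tv hs ht h => hYle ⟨sv, hs⟩ ⟨tv, ht⟩ h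
  have hY2' : ∀ (sv tv : ℕ) (hs : sv < n) (ht : tv < n), tv ≤ sv →
      Y ⟨sv, hs⟩ ⟨tv, ht⟩ = e (sv+1) * zh (sv+1) * z (tv+1) :=
    fun sv tv hs ht h => hYge ⟨sv, hs⟩ ⟨tv, ht⟩ h
  -- the key computation
  have key : ∀ i k : Fin n, (∑ j, A i j * Y j k) = if (i:ℕ) = (k:ℕ) then d else 0 := by
    intro i k
    have hin := i.isLt
    have hkn := k.isLt
    have hsplit : ∀ j : Fin n, A i j * Y j k =
        (if (j:ℕ) + 1 = (i:ℕ) then A i j * Y j k else 0) +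
        ((if (j:ℕ) = (i:ℕ) then A i j * Y j k else 0) +
        (if (j:ℕ) = (i:ℕ) + 1 then A i j * Y j k else 0)) := by
      intro j
      by_cases h1 : (j:ℕ) + 1 = (i:ℕ)
      · rw [if_pos h1, if_neg (by omega), if_neg (by omega)]; ring
      · by_cases h2 : (j:ℕ) = (i:ℕ)
        · rw [if_neg h1, if_pos h2, if_neg (by omega)]; ring
        · by_cases h3 : (j:ℕ) = (i:ℕ) + 1
          · rw [if_neg h1, if_neg h2, if_pos h3]; ring
          · rw [if_neg h1, if_neg h2, if_neg h3,
              htri i j (by omega), zero_mul]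
            ring
    rw [Finset.sum_congr rfl (fun j _ => hsplit j), Finset.sum_add_distrib,
      Finset.sum_add_distrib, finSumItePred (i:ℕ) hin, finSumIte, finSumIte,
      dif_pos hin]
    simp only [Fin.eta]
    rcases lt_trichotomy ((i:ℕ)) ((k:ℕ)) with hik | hik | hik
    · -- below diagonal of k : i < k
      rw [if_neg (show ¬((i:ℕ) = (k:ℕ)) by omega)]
      rw [dif_pos (show (i:ℕ)+1 < n by omega)]
      rw [hAa i i, hAa' i ((i:ℕ)+1), hYle i k (by omega),
        hYle' ((i:ℕ)+1) (by omega) k (by omega)]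
      by_cases hio : 1 ≤ (i:ℕ)
      · rw [if_pos hio, hAa' i ((i:ℕ)-1), hYle' ((i:ℕ)-1) (by omega) k (by omega),
          show (i:ℕ)-1+1 = (i:ℕ) by omega]
        have hE1 := hE (i:ℕ) hio (by omega)
        have hE2 := hE ((i:ℕ)+1) (by omega) (by omega)
        have hD2v := hD2 (i:ℕ) hio (by omega)
        linear_combination (zh ((k:ℕ)+1) * z (i:ℕ)) * hE1 -
          (zh ((k:ℕ)+1) * z ((i:ℕ)+1+1)) * hE2 + (zh ((k:ℕ)+1) * e ((i:ℕ)+1)) * hD2v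
      · rw [if_neg hio]
        have hio' : (i:ℕ) = 0 := by omega
        rw [hio']
        norm_num
        have hE1 := hE 1 (le_refl 1) (by omega)
        norm_num at hE1
        linear_combination (zh ((k:ℕ)+1) * e 1) * hD1 - (zh ((k:ℕ)+1) * z 2) * hE1
    · -- diagonal : i = k
      rw [if_pos hik]
      rw [hAa i i, hYle i k (by omega)]
      rw [← hik]
      by_cases hb : (i:ℕ)+1 < n
      · rw [dif_pos hb, hAa' i ((i:ℕ)+1), hYge' ((i:ℕ)+1) (by omega) k (by omega)]
        rw [← hik]
        by_cases hio : 1 ≤ (i:ℕ)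
        · rw [if_pos hio, hAa' i ((i:ℕ)-1), hYle' ((i:ℕ)-1) (by omega) k (by omega),
            show (i:ℕ)-1+1 = (i:ℕ) by omega]
          rw [← hik]
          have hE1 := hE (i:ℕ) hio (by omega)
          have hE2 := hE ((i:ℕ)+1) (by omega) hb
          have hD2v := hD2 (i:ℕ) hio hb
          have hWr4 := hWr ((i:ℕ)+1) (by omega) hb
          linear_combination hWr4 + (z (i:ℕ) * zh ((i:ℕ)+1)) * hE1 -
            (z ((i:ℕ)+1) * zh ((i:ℕ)+1+1)) * hE2 + (e ((i:ℕ)+1) * zh ((i:ℕ)+1)) * hD2v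
        · rw [if_neg hio]
          have hio' : (i:ℕ) = 0 := by omega
          rw [hio']
          norm_num
          have hE1 := hE 1 (le_refl 1) (by omega)
          norm_num at hE1
          have hWr1 := hWr 1 (le_refl 1) (by omega)
          norm_num at hWr1
          linear_combination hWr1 + (e 1 * zh 1) * hD1 - (zh 2 * z 1) * hE1
      · -- i = k = n-1
        rw [dif_neg hb]
        have hio : 1 ≤ (i:ℕ) := by omega
        rw [if_pos hio, hAa' i ((i:ℕ)-1), hYle' ((i:ℕ)-1) (by omega) k (by omega),
          show (i:ℕ)-1+1 = (i:ℕ) by omega]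
        rw [← hik]
        have hn5 : (i:ℕ)+1 = n := by omega
        have hE1 := hE (i:ℕ) hio (by omega)
        have hWr5 := hWr (i:ℕ) hio (by omega)
        have hC2' := hC2
        rw [← hn5] at hC2'
        simp only [Nat.add_sub_cancel] at hC2'
        linear_combination hWr5 + (zh (i:ℕ) * z ((i:ℕ)+1)) * hE1 +
          (e ((i:ℕ)+1) * z ((i:ℕ)+1)) * hC2'
    · -- above diagonal : i > k
      rw [if_neg (show ¬((i:ℕ) = (k:ℕ)) by omega)]
      have hio : 1 ≤ (i:ℕ) := by omega
      rw [if_pos hio, hAa i i, hAa' i ((i:ℕ)-1), hYge i k (by omega),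
        hYge' ((i:ℕ)-1) (by omega) k (by omega), show (i:ℕ)-1+1 = (i:ℕ) by omega]
      by_cases hb : (i:ℕ)+1 < n
      · rw [dif_pos hb, hAa' i ((i:ℕ)+1), hYge' ((i:ℕ)+1) (by omega) k (by omega)]
        have hE1 := hE (i:ℕ) hio (by omega)
        have hE2 := hE ((i:ℕ)+1) (by omega) hb
        have hC1v := hC1 (i:ℕ) hio hb
        linear_combination (z ((k:ℕ)+1) * zh (i:ℕ)) * hE1 -
          (z ((k:ℕ)+1) * zh ((i:ℕ)+1+1)) * hE2 + (z ((k:ℕ)+1) * e ((i:ℕ)+1)) * hC1v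
      · rw [dif_neg hb]
        have hn5 : (i:ℕ)+1 = n := by omega
        have hE1 := hE (i:ℕ) hio (by omega)
        have hC2' := hC2
        rw [← hn5] at hC2'
        simp only [Nat.add_sub_cancel] at hC2'
        linear_combination (z ((k:ℕ)+1) * zh (i:ℕ)) * hE1 +
          (z ((k:ℕ)+1) * e ((i:ℕ)+1)) * hC2'
  -- A * Y = d • 1
  have hAY : A * Y = d • (1 : Matrix (Fin n) (Fin n) ℝ) := by
    ext i k
    rw [Matrix.mul_apply, key i k]
    by_cases h : i = k
    · subst h
      simp [Matrix.smul_apply, Matrix.one_apply]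
    · rw [if_neg (fun hv => h (Fin.ext hv))]
      simp [Matrix.smul_apply, Matrix.one_apply_ne h]
  -- d ≠ 0
  have hdne : d ≠ 0 := by
    intro h0
    have h2 : Y = 0 := by
      have h1 : A⁻¹ * (A * Y) = A⁻¹ * (d • 1) := by rw [hAY]
      rw [← Matrix.mul_assoc, Matrix.nonsing_inv_mul A hdet, one_mul, h0, zero_smul,
        Matrix.mul_zero] at h1
      exact h1
    have h3 := hY2 0 (n-1) (by omega) (by omega) (by omega)
    rw [h2] at h3
    rw [show n-1+1 = n by omega, he1, hz1, hzh1] at h3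
    simp at h3
  -- the inverse
  have hinv : A⁻¹ = d⁻¹ • Y := by
    apply Matrix.inv_eq_right_inv
    rw [Matrix.mul_smul, hAY, smul_smul, inv_mul_cancel₀ hdne, one_smul]
  have hXval : ∀ i j : Fin n, x ((i:ℕ)+1) ((j:ℕ)+1) = d⁻¹ * Y i j := by
    intro i j
    rw [← hXx i j, hinv, Matrix.smul_apply, smul_eq_mul]
  have hx1n : x 1 n = d⁻¹ := by
    have h := hXval ⟨0, by omega⟩ ⟨n-1, by omega⟩
    rw [hY2 0 (n-1) (by omega) (by omega) (by omega),
      show n-1+1 = n by omega, he1, hz1, hzh1] at h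
    simpa using h
  refine ⟨hdne, hx1n, ?_⟩
  intro s k hs1 hsn hk1 hkn
  have hsn' : s - 1 < n := by omega
  have hkn' : k - 1 < n := by omega
  have h := hXval ⟨s-1, hsn'⟩ ⟨k-1, hkn'⟩
  rw [show s-1+1 = s by omega, show k-1+1 = k by omega] at h
  constructor
  · intro hsk
    rw [hY2 (s-1) (k-1) hsn' hkn' (by omega),
      show s-1+1 = s by omega, show k-1+1 = k by omega] at h
    rw [h, hx1n]; ring
  · intro hks
    rw [hY2' (s-1) (k-1) hsn' hkn' (by omega),
      show s-1+1 = s by omega, show k-1+1 = k by omega] at h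
    rw [h, hx1n]; ring
end

section
/- If A ∈ ℝ^{n×n} is a non-singular tridiagonal matrix and X = A⁻¹, then for every 1 ≤ k ≤ n, both submatrices U(k) = {x_{s,j} : 1 ≤ s ≤ k, k ≤ j ≤ n} (the rows 1..k and columns k..n of X) and L(k) = {x_{s,j} : k ≤ s ≤ n, 1 ≤ j ≤ k} (the rows k..n and columns 1..k of X) have rank not greater than 1. -/
/-!
Rows `0, …, k-1` of a tridiagonal `A` are supported in columns `0, …, k`, so the
`k × (k+1)` block `T` of `A` on those rows and columns has full row rank `k`
(its rows are rows of the invertible `A`). Since `(A * A⁻¹) i j = 0` for `i < k ≤ j`,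
`T` annihilates the block of `A⁻¹` on rows `0, …, k` and columns `k, …, n-1`, whose
rank is therefore at most `(k + 1) - k = 1`. The lower blocks follow by transposing.
-/

open Matrix Function

namespace Matrix

variable {K : Type*} [Field K] {n : ℕ}

def IsLowerHessenberg (A : Matrix (Fin n) (Fin n) K) : Prop :=
  ∀ i j : Fin n, (i : ℕ) + 1 < j → A i j = 0

def IsUpperHessenberg (A : Matrix (Fin n) (Fin n) K) : Prop :=
  ∀ i j : Fin n, (j : ℕ) + 1 < i → A i j = 0

theorem IsUpperHessenberg.transpose {A : Matrix (Fin n) (Fin n) K} (hA : A.IsUpperHessenberg) :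
    Aᵀ.IsLowerHessenberg :=
  fun i j h => hA j i h

theorem linearIndependent_row_submatrix_of_eq_zero_of_notMem_range {R m η ι : Type*}
    [Semiring R] {M : Matrix m η R} (hM : LinearIndependent R M.row) {c : ι → η}
    (hc : Injective c) (hzero : ∀ i j, j ∉ Set.range c → M i j = 0) :
    LinearIndependent R (M.submatrix id c).row := by
  refine LinearIndependent.of_comp (ExtendByZero.linearMap R c) ?_
  convert hM using 1
  ext i j
  by_cases hj : j ∈ Set.range c
  · obtain ⟨l, rfl⟩ := hj
    simp [hc.extend_apply]
  · simp [extend_apply' _ _ _ (by simpa using hj), hzero i j hj]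

theorem IsLowerHessenberg.rank_submatrix_inv_le_one {A : Matrix (Fin n) (Fin n) K}
    (hA : A.IsLowerHessenberg) (hdet : IsUnit A.det) {k : ℕ} (hk : k < n)
    {m p : Type*} [Fintype p] (r : m → Fin n) (c : p → Fin n)
    (hr : ∀ s, (r s : ℕ) ≤ k) (hc : ∀ j, k ≤ (c j : ℕ)) :
    (A⁻¹.submatrix r c).rank ≤ 1 := by
  set T : Matrix (Fin k) (Fin (k + 1)) K := A.submatrix (Fin.castLE hk.le) (Fin.castLE hk)
  set U : Matrix (Fin (k + 1)) p K := A⁻¹.submatrix (Fin.castLE hk) c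
  have hT : T.rank = k := by
    have hrows : LinearIndependent K (A.submatrix (Fin.castLE hk.le) id).row :=
      (linearIndependent_rows_of_isUnit ((isUnit_iff_isUnit_det A).mpr hdet)).comp _
        (Fin.castLE_injective _)
    have hsupp : ∀ i j, j ∉ Set.range (Fin.castLE hk) →
        A.submatrix (Fin.castLE hk.le) id i j = 0 := by
      intro i j hj
      simp only [Fin.range_castLE, Set.mem_ofPred_eq, not_lt] at hj
      exact hA _ _ (by simp only [id, Fin.val_castLE]; omega)
    simpa using (linearIndependent_row_submatrix_of_eq_zero_of_notMem_range hrows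
      (Fin.castLE_injective hk) hsupp).rank_matrix
  have hTU : T * U = 0 := by
    ext i j
    have hAX := congrFun (congrFun (mul_nonsing_inv A hdet) (Fin.castLE hk.le i)) (c j)
    rw [one_apply_ne (Fin.ne_of_lt (show Fin.castLE hk.le i < c j from i.2.trans_le (hc j))),
      mul_apply] at hAX
    rw [zero_apply, ← hAX, mul_apply]
    refine Fintype.sum_of_injective _ (Fin.castLE_injective hk) _ _ (fun l hl => ?_) fun _ => rfl
    simp only [Fin.range_castLE, Set.mem_ofPred_eq, not_lt] at hl
    rw [hA _ _ (by simp only [Fin.val_castLE]; omega), zero_mul]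
  have hU : U.rank ≤ 1 := by
    have := rank_add_rank_le_card_of_mul_eq_zero hTU
    simp only [hT, Fintype.card_fin] at this
    omega
  calc (A⁻¹.submatrix r c).rank
      = (U.submatrix (fun s => ⟨r s, Nat.lt_succ_of_le (hr s)⟩) id).rank := rfl
    _ ≤ 1 := (rank_submatrix_le _ _ _).trans hU

theorem IsUpperHessenberg.rank_submatrix_inv_le_one {A : Matrix (Fin n) (Fin n) K}
    (hA : A.IsUpperHessenberg) (hdet : IsUnit A.det) {k : ℕ} (hk : k < n)
    {m p : Type*} [Fintype m] [Fintype p] (r : m → Fin n) (c : p → Fin n)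
    (hr : ∀ s, k ≤ (r s : ℕ)) (hc : ∀ j, (c j : ℕ) ≤ k) :
    (A⁻¹.submatrix r c).rank ≤ 1 := by
  rw [← rank_transpose, transpose_submatrix, transpose_nonsing_inv]
  exact hA.transpose.rank_submatrix_inv_le_one (by rwa [det_transpose]) hk c r hc hr

end Matrix

/-- if `A` is a non-singular tridiagonal matrix and `X = A⁻¹`, then for
every `k`, the submatrix `U(k)` of `X` consisting of rows `1..k` and columns `k..n`
(here 0-based: rows `0..k` and columns `k..n-1`) and the submatrix `L(k)` consisting
of rows `k..n` and columns `1..k` both have rank at most 1. -/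
theorem inverse_tridiagonal_triangle_blocks_rank_le_one {n : ℕ}
    (A : Matrix (Fin n) (Fin n) ℝ)
    (htri : ∀ i j : Fin n, ((i : ℕ) + 1 < (j : ℕ) ∨ (j : ℕ) + 1 < (i : ℕ)) → A i j = 0)
    (hdet : IsUnit A.det) :
    ∀ k : ℕ, (hk : k < n) →
      (Matrix.of fun (s : Fin (k + 1)) (j : Fin (n - k)) =>
        A⁻¹ ⟨(s : ℕ), by omega⟩ ⟨k + (j : ℕ), by omega⟩).rank ≤ 1 ∧
      (Matrix.of fun (s : Fin (n - k)) (j : Fin (k + 1)) =>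
        A⁻¹ ⟨k + (s : ℕ), by omega⟩ ⟨(j : ℕ), by omega⟩).rank ≤ 1 := by
  intro k hk
  have hlower : A.IsLowerHessenberg := fun i j h => htri i j (Or.inl h)
  have hupper : A.IsUpperHessenberg := fun i j h => htri i j (Or.inr h)
  exact ⟨hlower.rank_submatrix_inv_le_one hdet hk (fun s : Fin (k + 1) => ⟨s, by omega⟩)
      (fun j : Fin (n - k) => ⟨k + j, by omega⟩) (fun s => Nat.le_of_lt_succ s.2)
      (fun _ => Nat.le_add_right _ _),
    hupper.rank_submatrix_inv_le_one hdet hk (fun s : Fin (n - k) => ⟨k + s, by omega⟩)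
      (fun j : Fin (k + 1) => ⟨j, by omega⟩) (fun _ => Nat.le_add_right _ _)
      (fun j => Nat.le_of_lt_succ j.2)⟩
end

section
/- Let A ∈ ℝ^{n×n} be a non-singular tridiagonal matrix satisfying a_{k-1,k} ≠ 0 and a_{k,k-1} ≠ 0 for 2 ≤ k ≤ n, and let X = A⁻¹. Then the following cross-ratio relations hold (stated in product form to avoid division): for every 1 ≤ k ≤ n−1 and all indices s ≤ k, j ≤ k, one has a_{k+1,k} · x_{s,k+1} · x_{k,j} = a_{k,k+1} · x_{k+1,j} · x_{s,k}; and for every 2 ≤ k ≤ n and all indices s ≥ k, j ≥ k, one has a_{k,k-1} · x_{k-1,j} · x_{s,k} = a_{k-1,k} · x_{s,k-1} · x_{k,j}. -/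
private lemma tri_sum_aux (n c : ℕ) (hc1 : 1 ≤ c) (hcn : c ≤ n) (f : ℕ → ℝ)
    (hz : ∀ u, u ≤ n + 1 → u ≠ c - 1 → u ≠ c → u ≠ c + 1 → f u = 0)
    (hsum : ∑ u ∈ Finset.range (n + 2), f u = 0) :
    f (c - 1) + f c + f (c + 1) = 0 := by
  have hsub : ({c - 1, c, c + 1} : Finset ℕ) ⊆ Finset.range (n + 2) := by
    intro u hu
    simp only [Finset.mem_insert, Finset.mem_singleton] at hu
    simp only [Finset.mem_range]
    omega
  have h1 : ∑ u ∈ ({c - 1, c, c + 1} : Finset ℕ), f u = 0 := by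
    rw [← hsum]
    refine Finset.sum_subset hsub (fun u hu hnu => ?_)
    simp only [Finset.mem_insert, Finset.mem_singleton, not_or] at hnu
    simp only [Finset.mem_range] at hu
    exact hz u (by omega) hnu.1 hnu.2.1 hnu.2.2
  rw [Finset.sum_insert (by simp only [Finset.mem_insert, Finset.mem_singleton]; omega),
    Finset.sum_insert (by simp only [Finset.mem_singleton]; omega),
    Finset.sum_singleton] at h1
  linarith

private lemma part1_zero (n : ℕ) (b y : ℕ → ℕ → ℝ)
    (hb0 : ∀ p q, ¬(1 ≤ p ∧ p ≤ n ∧ 1 ≤ q ∧ q ≤ n) → b p q = 0)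
    (row : ∀ p q, 1 ≤ p → p ≤ n → 1 ≤ q → q ≤ n → p ≠ q →
      b p (p - 1) * y (p - 1) q + b p p * y p q + b p (p + 1) * y (p + 1) q = 0)
    (col : ∀ s q, 1 ≤ s → s ≤ n → 1 ≤ q → q ≤ n → s ≠ q →
      y s (q - 1) * b (q - 1) q + y s q * b q q + y s (q + 1) * b (q + 1) q = 0) :
    ∀ d k s j, 1 ≤ s → s ≤ k → 1 ≤ j → j ≤ k → k + 1 + d = n →
      b (k + 1) k * y s (k + 1) * y k j = b k (k + 1) * y (k + 1) j * y s k := by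
  have step : ∀ k s j, 1 ≤ s → s ≤ k → 1 ≤ j → j ≤ k → k + 1 ≤ n →
      b (k + 1) k * y s (k + 1) * y k j - b k (k + 1) * y (k + 1) j * y s k
        = b (k + 2) (k + 1) * y s (k + 2) * y (k + 1) j
          - b (k + 1) (k + 2) * y (k + 2) j * y s (k + 1) := by
    intro k s j hs1 hsk hj1 hjk hkn
    have h1 := row (k + 1) j (by omega) (by omega) (by omega) (by omega) (by omega)
    have h2 := col s (k + 1) (by omega) (by omega) (by omega) (by omega) (by omega)
    simp only [Nat.add_sub_cancel] at h1 h2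
    linear_combination y s (k + 1) * h1 - y (k + 1) j * h2
  intro d
  induction d with
  | zero =>
    intro k s j hs1 hsk hj1 hjk hkn
    have h := step k s j hs1 hsk hj1 hjk (by omega)
    have z1 : b (k + 2) (k + 1) = 0 := hb0 _ _ (by omega)
    have z2 : b (k + 1) (k + 2) = 0 := hb0 _ _ (by omega)
    rw [z1, z2] at h
    linear_combination h
  | succ d ih =>
    intro k s j hs1 hsk hj1 hjk hkn
    have h := step k s j hs1 hsk hj1 hjk (by omega)
    have h2 := ih (k + 1) s j (by omega) (by omega) (by omega) (by omega) (by omega)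
    linarith

private lemma part2_zero (n : ℕ) (b y : ℕ → ℕ → ℝ)
    (hb0 : ∀ p q, ¬(1 ≤ p ∧ p ≤ n ∧ 1 ≤ q ∧ q ≤ n) → b p q = 0)
    (row : ∀ p q, 1 ≤ p → p ≤ n → 1 ≤ q → q ≤ n → p ≠ q →
      b p (p - 1) * y (p - 1) q + b p p * y p q + b p (p + 1) * y (p + 1) q = 0)
    (col : ∀ s q, 1 ≤ s → s ≤ n → 1 ≤ q → q ≤ n → s ≠ q →
      y s (q - 1) * b (q - 1) q + y s q * b q q + y s (q + 1) * b (q + 1) q = 0) :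
    ∀ k s j, k ≤ n → k ≤ s → s ≤ n → k ≤ j → j ≤ n →
      b k (k - 1) * y (k - 1) j * y s k = b (k - 1) k * y s (k - 1) * y k j := by
  intro k
  induction k with
  | zero =>
    intro s j _ _ _ _ _
    simp only [hb0 0 (0 - 1) (by omega), hb0 (0 - 1) 0 (by omega)]
    ring
  | succ k ih =>
    intro s j hkn hks hsn hkj hjn
    simp only [Nat.add_sub_cancel]
    rcases Nat.eq_zero_or_pos k with hk0 | hk1
    · subst hk0
      simp only [hb0 1 0 (by omega), hb0 0 1 (by omega)]
      ring
    · have h1 := row k j (by omega) (by omega) (by omega) (by omega) (by omega)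
      have h2 := col s k (by omega) (by omega) (by omega) (by omega) (by omega)
      have ihk := ih s j (by omega) (by omega) (by omega) (by omega) (by omega)
      linear_combination y k j * h2 - y s k * h1 + ihk

/-- cross-ratio relations `a_{k+1,k}·q̂_k = a_{k,k+1}·r_k` and
`a_{k,k-1}·r̂_k = a_{k-1,k}·q_k` for the entries of the inverse of a non-singular
tridiagonal matrix with nonzero sub- and super-diagonals, stated in product form.
Here `a i j` and `x i j` are the (1-based) entries of `A` and `X = A⁻¹`. -/
theorem inverse_tridiagonal_ratio_symmetry {n : ℕ}
    (A : Matrix (Fin n) (Fin n) ℝ) (a x : ℕ → ℕ → ℝ)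
    (hAa : ∀ i j : Fin n, A i j = a ((i : ℕ) + 1) ((j : ℕ) + 1))
    (hXx : ∀ i j : Fin n, A⁻¹ i j = x ((i : ℕ) + 1) ((j : ℕ) + 1))
    (htri : ∀ i j : Fin n, ((i : ℕ) + 1 < (j : ℕ) ∨ (j : ℕ) + 1 < (i : ℕ)) → A i j = 0)
    (hdet : IsUnit A.det)
    (hoff : ∀ k, 2 ≤ k → k ≤ n → a (k - 1) k ≠ 0 ∧ a k (k - 1) ≠ 0) :
    (∀ k, 1 ≤ k → k ≤ n - 1 → ∀ s j, 1 ≤ s → s ≤ k → 1 ≤ j → j ≤ k →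
      a (k + 1) k * x s (k + 1) * x k j = a k (k + 1) * x (k + 1) j * x s k) ∧
    (∀ k, 2 ≤ k → k ≤ n → ∀ s j, k ≤ s → s ≤ n → k ≤ j → j ≤ n →
      a k (k - 1) * x (k - 1) j * x s k = a (k - 1) k * x s (k - 1) * x k j) := by
  have hinv1 : A * A⁻¹ = 1 := Matrix.mul_nonsing_inv A hdet
  have hinv2 : A⁻¹ * A = 1 := Matrix.nonsing_inv_mul A hdet
  set b : ℕ → ℕ → ℝ := fun p q => if 1 ≤ p ∧ p ≤ n ∧ 1 ≤ q ∧ q ≤ n then a p q else 0 with hbdef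
  set y : ℕ → ℕ → ℝ := fun p q => if 1 ≤ p ∧ p ≤ n ∧ 1 ≤ q ∧ q ≤ n then x p q else 0 with hydef
  have hb0 : ∀ p q, ¬(1 ≤ p ∧ p ≤ n ∧ 1 ≤ q ∧ q ≤ n) → b p q = 0 := by
    intro p q h; simp only [hbdef]; rw [if_neg h]
  have hy0 : ∀ p q, ¬(1 ≤ p ∧ p ≤ n ∧ 1 ≤ q ∧ q ≤ n) → y p q = 0 := by
    intro p q h; simp only [hydef]; rw [if_neg h]
  have hbv : ∀ p q, 1 ≤ p → p ≤ n → 1 ≤ q → q ≤ n → b p q = a p q := by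
    intro p q h1 h2 h3 h4; simp only [hbdef]; rw [if_pos ⟨h1, h2, h3, h4⟩]
  have hyv : ∀ p q, 1 ≤ p → p ≤ n → 1 ≤ q → q ≤ n → y p q = x p q := by
    intro p q h1 h2 h3 h4; simp only [hydef]; rw [if_pos ⟨h1, h2, h3, h4⟩]
  have hbA : ∀ i j : Fin n, b ((i : ℕ) + 1) ((j : ℕ) + 1) = A i j := by
    intro i j
    have hi := i.isLt; have hj := j.isLt
    rw [hbv _ _ (by omega) (by omega) (by omega) (by omega), hAa]
  have hyX : ∀ i j : Fin n, y ((i : ℕ) + 1) ((j : ℕ) + 1) = A⁻¹ i j := by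
    intro i j
    have hi := i.isLt; have hj := j.isLt
    rw [hyv _ _ (by omega) (by omega) (by omega) (by omega), hXx]
  have exFin : ∀ p, 1 ≤ p → p ≤ n → ∃ i : Fin n, p = (i : ℕ) + 1 := by
    intro p hp1 hpn
    refine ⟨⟨p - 1, by omega⟩, ?_⟩
    show p = p - 1 + 1
    omega
  have hbtri : ∀ p u, 1 ≤ p → p ≤ n → 1 ≤ u → u ≤ n → (p + 1 < u ∨ u + 1 < p) → b p u = 0 := by
    intro p u hp1 hpn hu1 hun hcond
    obtain ⟨i, rfl⟩ := exFin p hp1 hpn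
    obtain ⟨j, rfl⟩ := exFin u hu1 hun
    rw [hbA]
    exact htri i j (by omega)
  have key_row : ∀ p q, 1 ≤ p → p ≤ n → 1 ≤ q → q ≤ n → p ≠ q →
      b p (p - 1) * y (p - 1) q + b p p * y p q + b p (p + 1) * y (p + 1) q = 0 := by
    intro p q hp1 hpn hq1 hqn hpq
    have hsum : ∑ u ∈ Finset.range (n + 2), b p u * y u q = 0 := by
      obtain ⟨i, hi⟩ := exFin p hp1 hpn
      obtain ⟨jf, hj⟩ := exFin q hq1 hqn
      have hone : (A * A⁻¹) i jf = (1 : Matrix (Fin n) (Fin n) ℝ) i jf := by rw [hinv1]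
      have hij : i ≠ jf := by
        intro h; apply hpq; rw [hi, hj, h]
      rw [Matrix.mul_apply, Matrix.one_apply_ne hij] at hone
      calc ∑ u ∈ Finset.range (n + 2), b p u * y u q
          = (∑ t ∈ Finset.range n, b p (t + 1) * y (t + 1) q
              + b p (n + 1) * y (n + 1) q) + b p 0 * y 0 q := by
            rw [Finset.sum_range_succ', Finset.sum_range_succ]
        _ = ∑ t ∈ Finset.range n, b p (t + 1) * y (t + 1) q := by
            rw [hy0 (n + 1) q (by omega), hy0 0 q (by omega)]
            ring
        _ = ∑ m : Fin n, A i m * A⁻¹ m jf := by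
            rw [← Fin.sum_univ_eq_sum_range (fun t => b p (t + 1) * y (t + 1) q) n]
            refine Finset.sum_congr rfl fun m _ => ?_
            show b p ((m : ℕ) + 1) * y ((m : ℕ) + 1) q = A i m * A⁻¹ m jf
            rw [hi, hj, hbA, hyX]
        _ = 0 := hone
    refine tri_sum_aux n p hp1 hpn (fun u => b p u * y u q) ?_ hsum
    intro u hu h1 h2 h3
    show b p u * y u q = 0
    by_cases hur : 1 ≤ u ∧ u ≤ n
    · rw [hbtri p u (by omega) (by omega) hur.1 hur.2 (by omega), zero_mul]
    · rw [hy0 u q (by omega), mul_zero]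
  have key_col : ∀ s q, 1 ≤ s → s ≤ n → 1 ≤ q → q ≤ n → s ≠ q →
      y s (q - 1) * b (q - 1) q + y s q * b q q + y s (q + 1) * b (q + 1) q = 0 := by
    intro s q hs1 hsn hq1 hqn hsq
    have hsum : ∑ u ∈ Finset.range (n + 2), y s u * b u q = 0 := by
      obtain ⟨sf, hs⟩ := exFin s hs1 hsn
      obtain ⟨qf, hq⟩ := exFin q hq1 hqn
      have hone : (A⁻¹ * A) sf qf = (1 : Matrix (Fin n) (Fin n) ℝ) sf qf := by rw [hinv2]
      have hij : sf ≠ qf := by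
        intro h; apply hsq; rw [hs, hq, h]
      rw [Matrix.mul_apply, Matrix.one_apply_ne hij] at hone
      calc ∑ u ∈ Finset.range (n + 2), y s u * b u q
          = (∑ t ∈ Finset.range n, y s (t + 1) * b (t + 1) q
              + y s (n + 1) * b (n + 1) q) + y s 0 * b 0 q := by
            rw [Finset.sum_range_succ', Finset.sum_range_succ]
        _ = ∑ t ∈ Finset.range n, y s (t + 1) * b (t + 1) q := by
            rw [hy0 s (n + 1) (by omega), hb0 0 q (by omega)]
            ring
        _ = ∑ m : Fin n, A⁻¹ sf m * A m qf := by
            rw [← Fin.sum_univ_eq_sum_range (fun t => y s (t + 1) * b (t + 1) q) n]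
            refine Finset.sum_congr rfl fun m _ => ?_
            show y s ((m : ℕ) + 1) * b ((m : ℕ) + 1) q = A⁻¹ sf m * A m qf
            rw [hs, hq, hyX, hbA]
        _ = 0 := hone
    refine tri_sum_aux n q hq1 hqn (fun u => y s u * b u q) ?_ hsum
    intro u hu h1 h2 h3
    show y s u * b u q = 0
    by_cases hur : 1 ≤ u ∧ u ≤ n
    · rw [hbtri u q hur.1 hur.2 (by omega) (by omega) (by omega), mul_zero]
    · rw [hy0 s u (by omega), zero_mul]
  constructor
  · intro k hk1 hkn s j hs1 hsk hj1 hjk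
    have main := part1_zero n b y hb0 key_row key_col (n - (k + 1)) k s j hs1 hsk hj1 hjk
      (by omega)
    rw [← hbv (k + 1) k (by omega) (by omega) (by omega) (by omega),
      ← hbv k (k + 1) (by omega) (by omega) (by omega) (by omega),
      ← hyv s (k + 1) (by omega) (by omega) (by omega) (by omega),
      ← hyv k j (by omega) (by omega) (by omega) (by omega),
      ← hyv (k + 1) j (by omega) (by omega) (by omega) (by omega),
      ← hyv s k (by omega) (by omega) (by omega) (by omega)]
    exact main
  · intro k hk2 hkn s j hks hsn hkj hjn
    have main := part2_zero n b y hb0 key_row key_col k s j hkn (by omega) hsn (by omega) hjn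
    rw [← hbv k (k - 1) (by omega) (by omega) (by omega) (by omega),
      ← hbv (k - 1) k (by omega) (by omega) (by omega) (by omega),
      ← hyv (k - 1) j (by omega) (by omega) (by omega) (by omega),
      ← hyv s k (by omega) (by omega) (by omega) (by omega),
      ← hyv s (k - 1) (by omega) (by omega) (by omega) (by omega),
      ← hyv k j (by omega) (by omega) (by omega) (by omega)]
    exact main
end

section
/- Let A ∈ ℝ^{n×n} be a non-singular tridiagonal matrix and X = A⁻¹, and let 1 ≤ k ≤ n−1. Suppose the lower-triangle row ratio r_k is infinite, i.e. there exists an index j with 1 ≤ j ≤ k such that x_{k,j} = 0 and x_{k+1,j} ≠ 0. Then x_{k,j'} = 0 for all 1 ≤ j' ≤ k, and x_{s,k} = 0 for all 1 ≤ s ≤ k. -/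
/-- if the lower-triangle row ratio `r_k` of the inverse of a
non-singular tridiagonal matrix is infinite (some `x k j = 0` with `x (k+1) j ≠ 0`,
`1 ≤ j ≤ k`), then the whole initial part of row `k` and of column `k` of `X = A⁻¹`
vanishes. Entries are 1-based via `a`, `x`. -/
theorem inverse_zeros_of_infinite_row_ratio {n : ℕ}
    (A : Matrix (Fin n) (Fin n) ℝ) (a x : ℕ → ℕ → ℝ)
    (hAa : ∀ i j : Fin n, A i j = a ((i : ℕ) + 1) ((j : ℕ) + 1))
    (hXx : ∀ i j : Fin n, A⁻¹ i j = x ((i : ℕ) + 1) ((j : ℕ) + 1))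
    (htri : ∀ i j : Fin n, ((i : ℕ) + 1 < (j : ℕ) ∨ (j : ℕ) + 1 < (i : ℕ)) → A i j = 0)
    (hdet : IsUnit A.det)
    (k : ℕ) (hk1 : 1 ≤ k) (hkn : k ≤ n - 1)
    (hr : ∃ j : ℕ, 1 ≤ j ∧ j ≤ k ∧ x k j = 0 ∧ x (k + 1) j ≠ 0) :
    (∀ j, 1 ≤ j → j ≤ k → x k j = 0) ∧ (∀ s, 1 ≤ s → s ≤ k → x s k = 0) := by
  obtain ⟨j0, hj01, hj0k, hx0, hx1⟩ := hr
  have hn2 : 2 ≤ n := by omega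
  have hkn' : k < n := by omega
  set K : Fin n := ⟨k - 1, by omega⟩ with hK
  set K' : Fin n := ⟨k, hkn'⟩ with hK'
  set J : Fin n := ⟨j0 - 1, by omega⟩ with hJ
  have hKv : (K : ℕ) = k - 1 := rfl
  have hK'v : (K' : ℕ) = k := rfl
  have hJv : (J : ℕ) = j0 - 1 := rfl
  have eK : (K : ℕ) + 1 = k := by omega
  have eK' : (K' : ℕ) + 1 = k + 1 := by omega
  have eJ : (J : ℕ) + 1 = j0 := by omega
  have hBKJ : A⁻¹ K J = 0 := by rw [hXx K J, eK, eJ]; exact hx0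
  have hBK'J : A⁻¹ K' J ≠ 0 := by rw [hXx K' J, eK', eJ]; exact hx1
  -- the truncated column `J` of `A⁻¹`
  set w : Fin n → ℝ := fun i => if k ≤ (i : ℕ) then A⁻¹ i J else 0 with hw
  have hwlo : ∀ t : Fin n, (t : ℕ) < k → w t = 0 := by
    intro t ht
    simp only [hw]
    rw [if_neg (by omega)]
  have hAw : ∀ i : Fin n, (i : ℕ) ≠ k - 1 → A.mulVec w i = 0 := by
    intro i hi
    rcases lt_or_ge (i : ℕ) k with h | h
    · have hik : (i : ℕ) + 1 < k := by omega
      simp only [Matrix.mulVec, dotProduct]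
      apply Finset.sum_eq_zero
      intro t _
      rcases lt_or_ge (t : ℕ) k with ht | ht
      · rw [hwlo t ht, mul_zero]
      · rw [htri i t (Or.inl (by omega)), zero_mul]
    · have h2 : A.mulVec w i = (A * A⁻¹) i J := by
        rw [Matrix.mul_apply]
        simp only [Matrix.mulVec, dotProduct]
        apply Finset.sum_congr rfl
        intro t _
        rcases lt_or_ge (t : ℕ) k with ht | ht
        · rw [hwlo t ht, mul_zero]
          rcases eq_or_ne (t : ℕ) (k - 1) with h3 | h3
          · have ht' : t = K := Fin.ext h3
            rw [ht', hBKJ, mul_zero]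
          · rw [htri i t (Or.inr (by omega)), zero_mul]
        · simp only [hw]
          rw [if_pos ht]
      rw [h2, Matrix.mul_nonsing_inv A hdet]
      apply Matrix.one_apply_ne
      intro hiJ
      have := congrArg Fin.val hiJ
      rw [hJv] at this
      omega
  have hwK' : w K' = A⁻¹ K' J := by
    show (if k ≤ (K' : ℕ) then A⁻¹ K' J else 0) = A⁻¹ K' J
    rw [if_pos (le_of_eq hK'v.symm)]
  have hwne : w ≠ 0 := by
    intro h0
    apply hBK'J
    rw [← hwK', h0, Pi.zero_apply]
  -- Goal 2 : column k of the inverse vanishes above the diagonal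
  have goal2 : ∀ s, 1 ≤ s → s ≤ k → x s k = 0 := by
    intro s hs1 hsk
    set S : Fin n := ⟨s - 1, by omega⟩ with hS
    have hSv : (S : ℕ) = s - 1 := rfl
    have eS : (S : ℕ) + 1 = s := by omega
    have key : (A.updateRow K (Pi.single S 1)).det = 0 := by
      rw [← Matrix.exists_mulVec_eq_zero_iff]
      refine ⟨w, hwne, ?_⟩
      funext i
      simp only [Matrix.mulVec, dotProduct, Pi.zero_apply]
      rcases eq_or_ne i K with rfl | hiK
      · rw [Matrix.updateRow_self]
        rw [Finset.sum_eq_single S]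
        · rw [Pi.single_eq_same, one_mul]; exact hwlo S (by omega)
        · intro t _ hts; rw [Pi.single_eq_of_ne hts, zero_mul]
        · intro h; exact absurd (Finset.mem_univ S) h
      · rw [Matrix.updateRow_ne hiK]
        exact hAw i (fun h => hiK (Fin.ext h))
    have hadj : A.adjugate S K = 0 := by rw [Matrix.adjugate_apply]; exact key
    have hinv : A⁻¹ S K = 0 := by
      rw [Matrix.inv_def, Matrix.smul_apply, hadj, smul_eq_mul, mul_zero]
    have := hXx S K
    rw [eS, eK] at this
    rw [← this]; exact hinv
  -- The trailing principal block is singular; produce a left null vector `y`.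
  set D : Matrix (Fin n) (Fin n) ℝ :=
    Matrix.of (fun i t => if k ≤ (i : ℕ) ∧ k ≤ (t : ℕ) then A i t else if i = t then 1 else 0)
    with hD
  have hDapp : ∀ i t : Fin n,
      D i t = if k ≤ (i : ℕ) ∧ k ≤ (t : ℕ) then A i t else if i = t then 1 else 0 := by
    intro i t; rfl
  have hDw : D.mulVec w = 0 := by
    funext i
    simp only [Matrix.mulVec, dotProduct, Pi.zero_apply]
    rcases lt_or_ge (i : ℕ) k with h | h
    · apply Finset.sum_eq_zero
      intro t _
      rcases lt_or_ge (t : ℕ) k with ht | ht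
      · rw [hwlo t ht, mul_zero]
      · have hit : i ≠ t := by intro h'; rw [h'] at h; omega
        rw [hDapp, if_neg (by omega), if_neg hit, zero_mul]
    · have h2 : (∑ t, D i t * w t) = A.mulVec w i := by
        simp only [Matrix.mulVec, dotProduct]
        apply Finset.sum_congr rfl
        intro t _
        rcases lt_or_ge (t : ℕ) k with ht | ht
        · rw [hwlo t ht, mul_zero, mul_zero]
        · rw [hDapp, if_pos ⟨h, ht⟩]
      rw [h2]
      exact hAw i (by omega)
  have hdetD : D.det = 0 := Matrix.exists_mulVec_eq_zero_iff.mp ⟨w, hwne, hDw⟩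
  have hdetDT : D.transpose.det = 0 := by rw [Matrix.det_transpose]; exact hdetD
  obtain ⟨y, hyne, hyD⟩ := Matrix.exists_mulVec_eq_zero_iff.mpr hdetDT
  have hyD' : ∀ t : Fin n, ∑ i, D i t * y i = 0 := by
    intro t
    have h := congrFun hyD t
    simp only [Matrix.mulVec, dotProduct, Matrix.transpose_apply, Pi.zero_apply] at h
    exact h
  have hy0 : ∀ t : Fin n, (t : ℕ) < k → y t = 0 := by
    intro t ht
    have h0 := hyD' t
    rw [Finset.sum_eq_single t] at h0
    · rw [hDapp, if_neg (by omega), if_pos rfl, one_mul] at h0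
      exact h0
    · intro i _ hit
      have hit' : i ≠ t := hit
      rcases lt_or_ge (i : ℕ) k with h | h
      · rw [hDapp, if_neg (by omega), if_neg hit', zero_mul]
      · rw [hDapp, if_neg (by omega), if_neg hit', zero_mul]
    · intro habs; exact absurd (Finset.mem_univ t) habs
  have hy2 : ∀ t : Fin n, k ≤ (t : ℕ) → ∑ i, A i t * y i = 0 := by
    intro t ht
    rw [← hyD' t]
    apply Finset.sum_congr rfl
    intro i _
    rcases lt_or_ge (i : ℕ) k with h | h
    · rw [hy0 i h, mul_zero, mul_zero]
    · rw [hDapp, if_pos ⟨h, ht⟩]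
  -- Goal 1 : row k of the inverse vanishes left of the diagonal
  have goal1 : ∀ j', 1 ≤ j' → j' ≤ k → x k j' = 0 := by
    intro j' hj'1 hj'k
    set J' : Fin n := ⟨j' - 1, by omega⟩ with hJ'
    have hJ'v : (J' : ℕ) = j' - 1 := rfl
    have eJ' : (J' : ℕ) + 1 = j' := by omega
    obtain ⟨c, hc⟩ : ∃ c : ℝ, c = A K' K * y K' := ⟨_, rfl⟩
    obtain ⟨y', hy'⟩ :
        ∃ y' : Fin n → ℝ, y' = fun i => y i - c * (Pi.single J' (1 : ℝ) : Fin n → ℝ) i :=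
      ⟨fun i => y i - c * (Pi.single J' (1 : ℝ) : Fin n → ℝ) i, rfl⟩
    -- y' is in the left kernel of the update matrix
    obtain ⟨N, hN⟩ : ∃ N : Matrix (Fin n) (Fin n) ℝ, N = A.updateRow J' (Pi.single K 1) :=
      ⟨_, rfl⟩
    have hNrow : ∀ i : Fin n, i ≠ J' → ∀ t, N i t = A i t := by
      intro i hi t
      rw [hN, Matrix.updateRow_ne hi]
    have hNJ' : ∀ t : Fin n, N J' t = if t = K then 1 else 0 := by
      intro t
      rw [hN, Matrix.updateRow_self, Pi.single_apply]
    have hyJ' : y J' = 0 := hy0 J' (by omega)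
    have hsum1 : ∀ t : Fin n, ∑ i, N i t * y i = ∑ i, A i t * y i := by
      intro t
      apply Finset.sum_congr rfl
      intro i _
      rcases eq_or_ne i J' with rfl | hi
      · rw [hyJ', mul_zero, mul_zero]
      · rw [hNrow i hi]
    have hsum2 : ∀ t : Fin n, ∑ i, N i t * (c * (Pi.single J' (1 : ℝ) : Fin n → ℝ) i) = c * N J' t := by
      intro t
      rw [Finset.sum_eq_single J']
      · rw [Pi.single_eq_same, mul_one]; ring
      · intro i _ hi
        rw [Pi.single_eq_of_ne hi, mul_zero, mul_zero]
      · intro habs; exact absurd (Finset.mem_univ J') habs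
    have hNy' : ∀ t : Fin n, ∑ i, N i t * y' i = 0 := by
      intro t
      have hexp : ∑ i, N i t * y' i
          = ∑ i, N i t * y i - ∑ i, N i t * (c * (Pi.single J' (1 : ℝ) : Fin n → ℝ) i) := by
        rw [← Finset.sum_sub_distrib]
        apply Finset.sum_congr rfl
        intro i _
        simp only [hy']
        ring
      rw [hexp, hsum1, hsum2, hNJ']
      rcases eq_or_ne t K with rfl | htK
      · -- sum over i of A i K * y i = c
        rw [if_pos rfl, mul_one]
        have : ∑ i, A i K * y i = c := by
          rw [Finset.sum_eq_single K']
          · exact hc.symm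
          · intro i _ hi
            rcases lt_or_ge (i : ℕ) k with h | h
            · rw [hy0 i h, mul_zero]
            · have hik : (i : ℕ) ≠ k := fun h' => hi (Fin.ext h')
              rw [htri i K (Or.inr (by omega)), zero_mul]
          · intro habs; exact absurd (Finset.mem_univ K') habs
        rw [this, sub_self]
      · rw [if_neg htK, mul_zero, sub_zero]
        rcases lt_or_ge (t : ℕ) k with ht | ht
        · apply Finset.sum_eq_zero
          intro i _
          rcases lt_or_ge (i : ℕ) k with h | h
          · rw [hy0 i h, mul_zero]
          · have htK' : (t : ℕ) ≠ k - 1 := fun h' => htK (Fin.ext h')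
            rw [htri i t (Or.inr (by omega)), zero_mul]
        · exact hy2 t ht
    have hy'ne : y' ≠ 0 := by
      intro h0
      apply hyne
      funext i
      rcases lt_or_ge (i : ℕ) k with h | h
      · rw [hy0 i h]; rfl
      · have hiJ' : i ≠ J' := by
          intro h'
          have := congrArg Fin.val h'
          rw [hJ'v] at this
          omega
        have := congrFun h0 i
        simp only [hy'] at this
        rw [Pi.single_eq_of_ne hiJ', mul_zero, sub_zero] at this
        exact this
    have hdetNT : N.transpose.det = 0 := by
      apply Matrix.exists_mulVec_eq_zero_iff.mp
      refine ⟨y', hy'ne, ?_⟩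
      funext t
      simp only [Matrix.mulVec, dotProduct, Pi.zero_apply, Matrix.transpose_apply]
      exact hNy' t
    have hdetN : N.det = 0 := by rw [← Matrix.det_transpose]; exact hdetNT
    have hadj : A.adjugate K J' = 0 := by rw [Matrix.adjugate_apply, ← hN]; exact hdetN
    have hinv : A⁻¹ K J' = 0 := by
      rw [Matrix.inv_def, Matrix.smul_apply, hadj, smul_eq_mul, mul_zero]
    have := hXx K J'
    rw [eK, eJ'] at this
    rw [← this]; exact hinv
  exact ⟨goal1, goal2⟩
end

section
/- Let A ∈ ℝ^{n×n} be a non-singular tridiagonal matrix. If a_{k-1,k} ≠ 0 for all 2 ≤ k ≤ n, then the corner entry of the inverse satisfies (A⁻¹)_{1,n} ≠ 0. Symmetrically, if a_{k,k-1} ≠ 0 for all 2 ≤ k ≤ n, then (A⁻¹)_{n,1} ≠ 0. -/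
open Matrix

lemma corner_aux {m : ℕ} (A : Matrix (Fin (m+1)) (Fin (m+1)) ℝ)
    (htri : ∀ i j : Fin (m+1), (i : ℕ) + 1 < (j : ℕ) → A i j = 0)
    (hsup : ∀ i : Fin m, A i.castSucc i.succ ≠ 0)
    (hdet : IsUnit A.det) : A⁻¹ 0 (Fin.last m) ≠ 0 := by
  have hinv : A⁻¹ 0 (Fin.last m)
      = Ring.inverse A.det * adjugate A 0 (Fin.last m) := by
    rw [Matrix.inv_def]; rfl
  have hadj := Matrix.adjugate_fin_succ_eq_det_submatrix A (0 : Fin (m+1)) (Fin.last m)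
  have hsub : A.submatrix (Fin.last m).succAbove (0 : Fin (m+1)).succAbove
      = A.submatrix Fin.castSucc Fin.succ := by
    ext k l
    simp [Fin.succAbove_last, Fin.succ_succAbove_zero, Fin.zero_succAbove]
  set M := A.submatrix Fin.castSucc Fin.succ with hM
  have hMtri : M.BlockTriangular OrderDual.toDual := by
    intro k l hkl
    have hkl' : (k : Fin m) < l := hkl
    apply htri
    simpa using Nat.succ_lt_succ hkl'
  have hMdet : M.det = ∏ i, M i i := Matrix.det_of_lowerTriangular M hMtri
  have hMne : M.det ≠ 0 := by
    rw [hMdet]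
    exact Finset.prod_ne_zero_iff.mpr fun i _ => hsup i
  rw [hinv, hadj, hsub]
  refine mul_ne_zero ?_ (mul_ne_zero (by positivity) hMne)
  rw [Ring.inverse_eq_inv']; exact inv_ne_zero (isUnit_iff_ne_zero.mp hdet)

/-- for a non-singular tridiagonal matrix `A`, if all superdiagonal
entries are nonzero then the corner entry `x 1 n` of `X = A⁻¹` is nonzero; symmetrically,
if all subdiagonal entries are nonzero then `x n 1 ≠ 0`. Entries are 1-based via `a`, `x`. -/
theorem inverse_corner_entries_nonzero {n : ℕ} (hn : 0 < n)
    (A : Matrix (Fin n) (Fin n) ℝ) (a x : ℕ → ℕ → ℝ)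
    (hAa : ∀ i j : Fin n, A i j = a ((i : ℕ) + 1) ((j : ℕ) + 1))
    (hXx : ∀ i j : Fin n, A⁻¹ i j = x ((i : ℕ) + 1) ((j : ℕ) + 1))
    (htri : ∀ i j : Fin n, ((i : ℕ) + 1 < (j : ℕ) ∨ (j : ℕ) + 1 < (i : ℕ)) → A i j = 0)
    (hdet : IsUnit A.det) :
    ((∀ k, 2 ≤ k → k ≤ n → a (k - 1) k ≠ 0) → x 1 n ≠ 0) ∧
    ((∀ k, 2 ≤ k → k ≤ n → a k (k - 1) ≠ 0) → x n 1 ≠ 0) := by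
  obtain ⟨m, rfl⟩ : ∃ m, n = m + 1 := ⟨n - 1, (Nat.succ_pred_eq_of_pos hn).symm⟩
  constructor
  · intro h
    have := corner_aux A (fun i j hij => htri i j (Or.inl hij))
      (fun i => by
        rw [hAa]
        have : ((i : ℕ) + 1) = ((i : ℕ) + 2) - 1 := rfl
        simp only [Fin.coe_castSucc, Fin.val_succ]
        rw [show (i : ℕ) + 1 = ((i : ℕ) + 2) - 1 from rfl]
        exact h ((i : ℕ) + 2) (by omega) (by omega)) hdet
    rw [hXx] at this
    simpa using this
  · intro h
    have hT : (Aᵀ)⁻¹ 0 (Fin.last m) ≠ 0 := by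
      refine corner_aux Aᵀ (fun i j hij => htri j i (Or.inr hij))
        (fun i => ?_) (by simpa using hdet)
      rw [transpose_apply, hAa]
      simp only [Fin.coe_castSucc, Fin.val_succ]
      rw [show (i : ℕ) + 1 = ((i : ℕ) + 2) - 1 from rfl]
      exact h ((i : ℕ) + 2) (by omega) (by omega)
    rw [← Matrix.transpose_nonsing_inv, transpose_apply, hXx] at hT
    simpa using hT
end

section
/- (Correctness of the Miller backward recursion for the last column of the inverse.) Let A ∈ ℝ^{n×n} be a non-singular tridiagonal matrix with a_{k,k+1} ≠ 0 for 1 ≤ k ≤ n−1. Define the sequence y_0 = 0, y_1 = 1, and y_{k+1} = −a_{k,k+1}^{-1}·(a_{k,k-1}·y_{k-1} + a_{k,k}·y_k) for 1 ≤ k < n (with the convention a_{1,0} = 0). Then the normalising quantity d = a_{n,n-1}·y_{n-1} + a_{n,n}·y_n is nonzero, and the last column of the inverse is given by (A⁻¹)_{k,n} = y_k / d for 1 ≤ k ≤ n. -/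
/-- correctness of the Miller backward recursion for the last column of
the inverse of a non-singular tridiagonal matrix with nonzero superdiagonal. With
`y 0 = 0`, `y 1 = 1` and `y (k+1) = -(a k (k+1))⁻¹ (a k (k-1) y (k-1) + a k k * y k)`
(convention `a 1 0 = 0`), the normalising quantity `d = a n (n-1) y (n-1) + a n n * y n`
is nonzero and `x k n = y k / d`. Entries are 1-based via `a`, `x`. -/
theorem miller_last_column_correct {n : ℕ} (hn : 1 ≤ n)
    (A : Matrix (Fin n) (Fin n) ℝ) (a x : ℕ → ℕ → ℝ)
    (hAa : ∀ i j : Fin n, A i j = a ((i : ℕ) + 1) ((j : ℕ) + 1))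
    (hXx : ∀ i j : Fin n, A⁻¹ i j = x ((i : ℕ) + 1) ((j : ℕ) + 1))
    (htri : ∀ i j : Fin n, ((i : ℕ) + 1 < (j : ℕ) ∨ (j : ℕ) + 1 < (i : ℕ)) → A i j = 0)
    (hdet : IsUnit A.det)
    (hsup : ∀ k, 1 ≤ k → k ≤ n - 1 → a k (k + 1) ≠ 0)
    (ha10 : a 1 0 = 0)
    (y : ℕ → ℝ) (hy0 : y 0 = 0) (hy1 : y 1 = 1)
    (hyrec : ∀ k, 1 ≤ k → k < n →
      y (k + 1) = -(a k (k + 1))⁻¹ * (a k (k - 1) * y (k - 1) + a k k * y k)) :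
    a n (n - 1) * y (n - 1) + a n n * y n ≠ 0 ∧
    ∀ k, 1 ≤ k → k ≤ n →
      x k n = y k / (a n (n - 1) * y (n - 1) + a n n * y n) := by
  set d := a n (n - 1) * y (n - 1) + a n n * y n with hd
  set v : Fin n → ℝ := fun i => y ((i : ℕ) + 1) with hv
  have hlast : n - 1 < n := Nat.sub_lt hn one_pos
  set lastI : Fin n := ⟨n - 1, hlast⟩ with hlastI
  have hAv : A.mulVec v = fun i => if i = lastI then d else 0 := by
    funext i
    have key : A.mulVec v i =
        (∑ j : Fin n, if (j : ℕ) + 1 = (i : ℕ) then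
            a ((i : ℕ) + 1) (i : ℕ) * y (i : ℕ) else 0)
        + (∑ j : Fin n, if j = i then
            a ((i : ℕ) + 1) ((i : ℕ) + 1) * y ((i : ℕ) + 1) else 0)
        + (∑ j : Fin n, if (j : ℕ) = (i : ℕ) + 1 then
            a ((i : ℕ) + 1) ((i : ℕ) + 2) * y ((i : ℕ) + 2) else 0) := by
      rw [Matrix.mulVec, dotProduct, ← Finset.sum_add_distrib, ← Finset.sum_add_distrib]
      apply Finset.sum_congr rfl
      intro j _
      rcases Nat.lt_trichotomy ((j : ℕ) + 1) (i : ℕ) with h | h | h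
      · rw [htri i j (Or.inr h), if_neg (by omega),
          if_neg (by intro e; rw [e] at h; omega), if_neg (by omega)]
        ring
      · rw [hAa i j, if_pos h, if_neg (by intro e; rw [e] at h; omega),
          if_neg (by omega), hv]
        simp only [h]
        ring
      · rcases Nat.lt_trichotomy (j : ℕ) ((i : ℕ) + 1) with h2 | h2 | h2
        · have hji : j = i := Fin.ext (by omega)
          rw [hAa i j, if_neg (by omega), if_pos hji, if_neg (by omega), hv]
          rw [hji]
          ring
        · rw [hAa i j, if_neg (by omega),
            if_neg (by intro e; rw [e] at h2; omega), if_pos h2, hv]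
          simp only [h2]
          ring
        · rw [htri i j (Or.inl h2), if_neg (by omega),
            if_neg (by intro e; rw [e] at h2; omega), if_neg (by omega)]
          ring
    have hS2 : (∑ j : Fin n, if j = i then
        a ((i : ℕ) + 1) ((i : ℕ) + 1) * y ((i : ℕ) + 1) else 0)
        = a ((i : ℕ) + 1) ((i : ℕ) + 1) * y ((i : ℕ) + 1) := by
      rw [Finset.sum_ite_eq' Finset.univ i, if_pos (Finset.mem_univ i)]
    have hS1 : (∑ j : Fin n, if (j : ℕ) + 1 = (i : ℕ) then
        a ((i : ℕ) + 1) (i : ℕ) * y (i : ℕ) else 0)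
        = a ((i : ℕ) + 1) (i : ℕ) * y (i : ℕ) := by
      rcases Nat.eq_zero_or_pos (i : ℕ) with h0 | h0
      · rw [h0]
        simp [ha10, hy0]
      · have hi1 : (i : ℕ) - 1 < n := by omega
        have : ∀ j : Fin n, ((j : ℕ) + 1 = (i : ℕ)) ↔ j = ⟨(i : ℕ) - 1, hi1⟩ := by
          intro j; constructor
          · intro e; exact Fin.ext (by simp; omega)
          · intro e; rw [e]; simp; omega
        calc (∑ j : Fin n, if (j : ℕ) + 1 = (i : ℕ) then
              a ((i : ℕ) + 1) (i : ℕ) * y (i : ℕ) else 0)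
            = ∑ j : Fin n, if j = (⟨(i : ℕ) - 1, hi1⟩ : Fin n) then
              a ((i : ℕ) + 1) (i : ℕ) * y (i : ℕ) else 0 := by
              apply Finset.sum_congr rfl; intro j _
              rw [if_congr (this j) rfl rfl]
          _ = _ := by
              rw [Finset.sum_ite_eq' Finset.univ, if_pos (Finset.mem_univ _)]
    have hS3 : (∑ j : Fin n, if (j : ℕ) = (i : ℕ) + 1 then
        a ((i : ℕ) + 1) ((i : ℕ) + 2) * y ((i : ℕ) + 2) else 0)
        = if (i : ℕ) + 1 < n then
            a ((i : ℕ) + 1) ((i : ℕ) + 2) * y ((i : ℕ) + 2) else 0 := by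
      by_cases hin : (i : ℕ) + 1 < n
      · rw [if_pos hin]
        have : ∀ j : Fin n, ((j : ℕ) = (i : ℕ) + 1) ↔ j = ⟨(i : ℕ) + 1, hin⟩ := by
          intro j; constructor
          · intro e; exact Fin.ext (by simpa using e)
          · intro e; rw [e]
        calc _ = ∑ j : Fin n, if j = (⟨(i : ℕ) + 1, hin⟩ : Fin n) then
              a ((i : ℕ) + 1) ((i : ℕ) + 2) * y ((i : ℕ) + 2) else 0 := by
              apply Finset.sum_congr rfl; intro j _
              rw [if_congr (this j) rfl rfl]
          _ = _ := by
              rw [Finset.sum_ite_eq' Finset.univ, if_pos (Finset.mem_univ _)]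
      · rw [if_neg hin]
        apply Finset.sum_eq_zero
        intro j _
        rw [if_neg (by have := j.isLt; omega)]
    rw [key, hS1, hS2, hS3]
    by_cases hil : i = lastI
    · rw [if_pos hil, hil]
      simp only [hlastI]
      rw [if_neg (by omega), hd]
      have h1 : n - 1 + 1 = n := by omega
      rw [h1]
      ring
    · have hilt : (i : ℕ) + 1 < n := by
        have := i.isLt
        have : (i : ℕ) ≠ n - 1 := fun e => hil (Fin.ext (by simp [hlastI, e]))
        omega
      rw [if_pos hilt, if_neg hil]
      set k := (i : ℕ) + 1 with hk
      have hrec := hyrec k (by omega) (by omega)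
      have hne := hsup k (by omega) (by omega)
      have hk1 : k - 1 = (i : ℕ) := by omega
      rw [hk1] at hrec
      rw [hrec]
      field_simp
      ring
  have hvne : v ≠ 0 := by
    intro h
    have := congrFun h ⟨0, hn⟩
    simp [hv, hy1] at this
  have hdne : d ≠ 0 := by
    intro h0
    apply hvne
    have h1 : A.mulVec v = 0 := by
      rw [hAv]; funext i; simp [h0]
    have h2 : A⁻¹.mulVec (A.mulVec v) = v := by
      rw [Matrix.mulVec_mulVec, Matrix.nonsing_inv_mul A hdet, Matrix.one_mulVec]
    rw [h1, Matrix.mulVec_zero] at h2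
    exact h2.symm
  refine ⟨hdne, ?_⟩
  intro k hk1 hkn
  have hkI : k - 1 < n := by omega
  set kI : Fin n := ⟨k - 1, hkI⟩ with hkIdef
  have h2 : A⁻¹.mulVec (A.mulVec v) = v := by
    rw [Matrix.mulVec_mulVec, Matrix.nonsing_inv_mul A hdet, Matrix.one_mulVec]
  have h3 : A⁻¹.mulVec (A.mulVec v) kI = A⁻¹ kI lastI * d := by
    rw [hAv, Matrix.mulVec, dotProduct]
    calc (∑ j : Fin n, A⁻¹ kI j * if j = lastI then d else 0)
        = ∑ j : Fin n, if j = lastI then A⁻¹ kI lastI * d else 0 := by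
          apply Finset.sum_congr rfl; intro j _
          by_cases hjl : j = lastI
          · rw [if_pos hjl, if_pos hjl, hjl]
          · rw [if_neg hjl, if_neg hjl, mul_zero]
      _ = _ := by rw [Finset.sum_ite_eq' Finset.univ, if_pos (Finset.mem_univ _)]
  have h4 : v kI = A⁻¹ kI lastI * d := by rw [← h3, h2]
  have h5 : v kI = y k := by
    simp only [hv, hkIdef]
    congr 1
    omega
  have h6 : A⁻¹ kI lastI = x k n := by
    rw [hXx]
    congr 1 <;> simp only [hkIdef, hlastI, Fin.val_mk] <;> omega
  rw [h5, h6] at h4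
  rw [eq_div_iff hdne]
  linarith [h4]
end

section
/- (Ratio recurrences.) Let A ∈ ℝ^{n×n} (n ≥ 2) be a non-singular tridiagonal matrix whose inverse X = A⁻¹ has all entries nonzero. Define the lower-triangle column ratios q_k = x_{s,k-1}/x_{s,k} for s ≥ k (independent of s, 2 ≤ k ≤ n) and the lower-triangle row ratios r_k = x_{k+1,j}/x_{k,j} for j ≤ k (independent of j, 1 ≤ k ≤ n−1). Then a_{1,1} ≠ 0, q_2 = −a_{2,1}/a_{1,1}, and for 1 < k < n the denominator a_{k,k} + a_{k-1,k}·q_k is nonzero with q_{k+1} = −a_{k+1,k}/(a_{k,k} + a_{k-1,k}·q_k); symmetrically, a_{n,n} ≠ 0, r_{n-1} = −a_{n,n-1}/a_{n,n}, and for 1 < k < n the denominator a_{k,k} + a_{k,k+1}·r_k is nonzero with r_{k-1} = −a_{k,k-1}/(a_{k,k} + a_{k,k+1}·r_k). -/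
private lemma sum_two' {n : ℕ} (f : Fin n → ℝ) (i1 i2 : Fin n) (h12 : i1 ≠ i2)
    (h0 : ∀ m, m ≠ i1 → m ≠ i2 → f m = 0) : ∑ m, f m = f i1 + f i2 := by
  have h := Finset.sum_subset (Finset.subset_univ ({i1, i2} : Finset (Fin n)))
    (fun m _ hm => by
      simp only [Finset.mem_insert, Finset.mem_singleton, not_or] at hm
      exact h0 m hm.1 hm.2)
  rw [← h, Finset.sum_insert (by simp [h12]), Finset.sum_singleton]

private lemma sum_three' {n : ℕ} (f : Fin n → ℝ) (i1 i2 i3 : Fin n) (h12 : i1 ≠ i2)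
    (h13 : i1 ≠ i3) (h23 : i2 ≠ i3)
    (h0 : ∀ m, m ≠ i1 → m ≠ i2 → m ≠ i3 → f m = 0) : ∑ m, f m = f i1 + f i2 + f i3 := by
  have h := Finset.sum_subset (Finset.subset_univ ({i1, i2, i3} : Finset (Fin n)))
    (fun m _ hm => by
      simp only [Finset.mem_insert, Finset.mem_singleton, not_or] at hm
      exact h0 m hm.1 hm.2.1 hm.2.2)
  rw [← h, Finset.sum_insert (by simp [h12, h13]), Finset.sum_insert (by simp [h23]),
    Finset.sum_singleton, add_assoc]

/-- ratio recurrences: for a non-singular tridiagonal matrix `A` (n ≥ 2)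
whose inverse `X = A⁻¹` has all entries nonzero, the lower-triangle column ratios
`q k = x s (k-1) / x s k` (any `s ≥ k`) and row ratios `r k = x (k+1) j / x k j`
(any `j ≤ k`) satisfy the recurrences
`q 2 = -a 2 1 / a 1 1`, `q (k+1) = -a (k+1) k / (a k k + a (k-1) k * q k)` and
`r (n-1) = -a n (n-1) / a n n`, `r (k-1) = -a k (k-1) / (a k k + a k (k+1) * r k)`,
with all denominators nonzero. Entries are 1-based via `a`, `x`. -/
theorem ratio_recurrences {n : ℕ} (hn : 2 ≤ n)
    (A : Matrix (Fin n) (Fin n) ℝ) (a x : ℕ → ℕ → ℝ)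
    (hAa : ∀ i j : Fin n, A i j = a ((i : ℕ) + 1) ((j : ℕ) + 1))
    (hXx : ∀ i j : Fin n, A⁻¹ i j = x ((i : ℕ) + 1) ((j : ℕ) + 1))
    (htri : ∀ i j : Fin n, ((i : ℕ) + 1 < (j : ℕ) ∨ (j : ℕ) + 1 < (i : ℕ)) → A i j = 0)
    (hdet : IsUnit A.det)
    (hxne : ∀ i j, 1 ≤ i → i ≤ n → 1 ≤ j → j ≤ n → x i j ≠ 0)
    (q r : ℕ → ℝ)
    (hq : ∀ k s, 2 ≤ k → k ≤ n → k ≤ s → s ≤ n → q k = x s (k - 1) / x s k)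
    (hr : ∀ k j, 1 ≤ k → k ≤ n - 1 → 1 ≤ j → j ≤ k → r k = x (k + 1) j / x k j) :
    a 1 1 ≠ 0 ∧
    q 2 = -(a 2 1) / a 1 1 ∧
    (∀ k, 1 < k → k < n →
      a k k + a (k - 1) k * q k ≠ 0 ∧
      q (k + 1) = -(a (k + 1) k) / (a k k + a (k - 1) k * q k)) ∧
    a n n ≠ 0 ∧
    r (n - 1) = -(a n (n - 1)) / a n n ∧
    (∀ k, 1 < k → k < n →
      a k k + a k (k + 1) * r k ≠ 0 ∧
      r (k - 1) = -(a k (k - 1)) / (a k k + a k (k + 1) * r k)) := by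
  have hXA := Matrix.nonsing_inv_mul A hdet
  have hAX := Matrix.mul_nonsing_inv A hdet
  have hentL : ∀ i j : Fin n, (∑ m, A⁻¹ i m * A m j) = if i = j then (1:ℝ) else 0 := by
    intro i j
    have := congrFun (congrFun hXA i) j
    simpa [Matrix.mul_apply, Matrix.one_apply] using this
  have hentR : ∀ i j : Fin n, (∑ m, A i m * A⁻¹ m j) = if i = j then (1:ℝ) else 0 := by
    intro i j
    have := congrFun (congrFun hAX i) j
    simpa [Matrix.mul_apply, Matrix.one_apply] using this
  -- column relation, k = 1
  have col1 : ∀ s : ℕ, 1 ≤ s → s ≤ n →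
      x s 1 * a 1 1 + x s 2 * a 2 1 = if s = 1 then 1 else 0 := by
    intro s hs1 hsn
    have hi : s - 1 < n := by omega
    have h0 : (0:ℕ) < n := by omega
    have h1 : (1:ℕ) < n := by omega
    have key := hentL ⟨s-1, hi⟩ ⟨0, h0⟩
    rw [sum_two' (fun m => A⁻¹ ⟨s-1, hi⟩ m * A m ⟨0, h0⟩) ⟨0, h0⟩ ⟨1, h1⟩
      (by simp) (by
        intro m hm1 hm2
        have h1' : (m:ℕ) ≠ 0 := fun h => hm1 (Fin.ext h)
        have h2' : (m:ℕ) ≠ 1 := fun h => hm2 (Fin.ext h)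
        show A⁻¹ _ m * A m ⟨0, h0⟩ = 0
        rw [htri m ⟨0, h0⟩ (by simp; omega)]
        exact mul_zero _)] at key
    simp only [hXx, hAa] at key
    have hs' : s - 1 + 1 = s := by omega
    rw [hs'] at key
    norm_num at key
    by_cases hsk : s = 1
    · rw [if_pos (show s - 1 = 0 by omega)] at key
      rw [if_pos hsk]
      exact key
    · rw [if_neg (show ¬ s - 1 = 0 by omega)] at key
      rw [if_neg hsk]
      exact key
  -- column relation, 2 ≤ k < n
  have colMid : ∀ s k : ℕ, 1 ≤ s → s ≤ n → 2 ≤ k → k < n →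
      x s (k-1) * a (k-1) k + x s k * a k k + x s (k+1) * a (k+1) k
        = if s = k then 1 else 0 := by
    intro s k hs1 hsn hk2 hkn
    have hi : s - 1 < n := by omega
    have hj : k - 1 < n := by omega
    have hm1 : k - 2 < n := by omega
    have hm3 : k < n := hkn
    have key := hentL ⟨s-1, hi⟩ ⟨k-1, hj⟩
    rw [sum_three' (fun m => A⁻¹ ⟨s-1, hi⟩ m * A m ⟨k-1, hj⟩) ⟨k-2, hm1⟩ ⟨k-1, hj⟩ ⟨k, hm3⟩
      (by simp only [ne_eq, Fin.mk.injEq]; omega)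
      (by simp only [ne_eq, Fin.mk.injEq]; omega)
      (by simp only [ne_eq, Fin.mk.injEq]; omega)
      (by
        intro m hma hmb hmc
        have ha' : (m:ℕ) ≠ k-2 := fun h => hma (Fin.ext h)
        have hb' : (m:ℕ) ≠ k-1 := fun h => hmb (Fin.ext h)
        have hc' : (m:ℕ) ≠ k := fun h => hmc (Fin.ext h)
        show A⁻¹ _ m * A m ⟨k-1, hj⟩ = 0
        rw [htri m ⟨k-1, hj⟩ (by simp; omega)]
        exact mul_zero _)] at key
    simp only [hXx, hAa] at key
    have e1 : s - 1 + 1 = s := by omega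
    have e2 : k - 2 + 1 = k - 1 := by omega
    have e3 : k - 1 + 1 = k := by omega
    rw [e1, e2, e3] at key
    by_cases hsk : s = k
    · have : (⟨s-1, hi⟩ : Fin n) = ⟨k-1, hj⟩ := by
        simp only [Fin.mk.injEq]; omega
      rw [if_pos this] at key
      rw [if_pos hsk]
      exact key
    · have : (⟨s-1, hi⟩ : Fin n) ≠ ⟨k-1, hj⟩ := by
        simp only [ne_eq, Fin.mk.injEq]; omega
      rw [if_neg this] at key
      rw [if_neg hsk]
      exact key
  -- row relation, k = n
  have rowN : ∀ t : ℕ, 1 ≤ t → t ≤ n →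
      a n (n-1) * x (n-1) t + a n n * x n t = if n = t then 1 else 0 := by
    intro t ht1 htn
    have hj : t - 1 < n := by omega
    have hi : n - 1 < n := by omega
    have hm1 : n - 2 < n := by omega
    have key := hentR ⟨n-1, hi⟩ ⟨t-1, hj⟩
    rw [sum_two' (fun m => A ⟨n-1, hi⟩ m * A⁻¹ m ⟨t-1, hj⟩) ⟨n-2, hm1⟩ ⟨n-1, hi⟩
      (by simp only [ne_eq, Fin.mk.injEq]; omega)
      (by
        intro m hma hmb
        have ha' : (m:ℕ) ≠ n-2 := fun h => hma (Fin.ext h)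
        have hb' : (m:ℕ) ≠ n-1 := fun h => hmb (Fin.ext h)
        have hmlt := m.isLt
        show A ⟨n-1, hi⟩ m * A⁻¹ m _ = 0
        rw [htri ⟨n-1, hi⟩ m (by simp; omega)]
        exact zero_mul _)] at key
    simp only [hXx, hAa] at key
    have e1 : n - 1 + 1 = n := by omega
    have e2 : n - 2 + 1 = n - 1 := by omega
    have e3 : t - 1 + 1 = t := by omega
    rw [e1, e2, e3] at key
    by_cases hnt : n = t
    · have : (⟨n-1, hi⟩ : Fin n) = ⟨t-1, hj⟩ := by
        simp only [Fin.mk.injEq]; omega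
      rw [if_pos this] at key
      rw [if_pos hnt]
      exact key
    · have : (⟨n-1, hi⟩ : Fin n) ≠ ⟨t-1, hj⟩ := by
        simp only [ne_eq, Fin.mk.injEq]; omega
      rw [if_neg this] at key
      rw [if_neg hnt]
      exact key
  -- row relation, 2 ≤ k < n
  have rowMid : ∀ k t : ℕ, 2 ≤ k → k < n → 1 ≤ t → t ≤ n →
      a k (k-1) * x (k-1) t + a k k * x k t + a k (k+1) * x (k+1) t
        = if k = t then 1 else 0 := by
    intro k t hk2 hkn ht1 htn
    have hj : t - 1 < n := by omega
    have hi : k - 1 < n := by omega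
    have hm1 : k - 2 < n := by omega
    have hm3 : k < n := hkn
    have key := hentR ⟨k-1, hi⟩ ⟨t-1, hj⟩
    rw [sum_three' (fun m => A ⟨k-1, hi⟩ m * A⁻¹ m ⟨t-1, hj⟩) ⟨k-2, hm1⟩ ⟨k-1, hi⟩ ⟨k, hm3⟩
      (by simp only [ne_eq, Fin.mk.injEq]; omega)
      (by simp only [ne_eq, Fin.mk.injEq]; omega)
      (by simp only [ne_eq, Fin.mk.injEq]; omega)
      (by
        intro m hma hmb hmc
        have ha' : (m:ℕ) ≠ k-2 := fun h => hma (Fin.ext h)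
        have hb' : (m:ℕ) ≠ k-1 := fun h => hmb (Fin.ext h)
        have hc' : (m:ℕ) ≠ k := fun h => hmc (Fin.ext h)
        show A ⟨k-1, hi⟩ m * A⁻¹ m _ = 0
        rw [htri ⟨k-1, hi⟩ m (by simp; omega)]
        exact zero_mul _)] at key
    simp only [hXx, hAa] at key
    have e1 : k - 1 + 1 = k := by omega
    have e2 : k - 2 + 1 = k - 1 := by omega
    have e3 : t - 1 + 1 = t := by omega
    rw [e1, e2, e3] at key
    by_cases hkt : k = t
    · have : (⟨k-1, hi⟩ : Fin n) = ⟨t-1, hj⟩ := by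
        simp only [Fin.mk.injEq]; omega
      rw [if_pos this] at key
      rw [if_pos hkt]
      exact key
    · have : (⟨k-1, hi⟩ : Fin n) ≠ ⟨t-1, hj⟩ := by
        simp only [ne_eq, Fin.mk.injEq]; omega
      rw [if_neg this] at key
      rw [if_neg hkt]
      exact key
  -- scalar facts
  have hx22 : x 2 2 ≠ 0 := hxne 2 2 (by omega) hn (by omega) hn
  have e11 : x 1 1 * a 1 1 + x 1 2 * a 2 1 = 1 := by
    have := col1 1 (by omega) (by omega); simpa using this
  have e21 : x 2 1 * a 1 1 + x 2 2 * a 2 1 = 0 := by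
    have := col1 2 (by omega) hn; simpa using this
  have ha11 : a 1 1 ≠ 0 := by
    intro h
    have h21 : a 2 1 = 0 := by
      have hz : x 2 2 * a 2 1 = 0 := by linear_combination e21 - x 2 1 * h
      exact (mul_eq_zero.mp hz).resolve_left hx22
    rw [h, h21] at e11
    norm_num at e11
  have hq2 : q 2 = x 2 1 / x 2 2 := by
    have := hq 2 2 le_rfl hn le_rfl hn; simpa using this
  have hq2' : q 2 * x 2 2 = x 2 1 := by
    rw [hq2]; field_simp
  refine ⟨ha11, ?_, ?_, ?_, ?_, ?_⟩
  · rw [eq_div_iff ha11]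
    have h5 : x 2 2 * (q 2 * a 1 1 + a 2 1) = 0 := by
      linear_combination e21 + a 1 1 * hq2'
    have := (mul_eq_zero.mp h5).resolve_left hx22
    linarith
  · -- q middle
    intro k hk1 hkn
    have hxkk : x k k ≠ 0 := hxne k k (by omega) (by omega) (by omega) (by omega)
    have hx1k : x (k+1) k ≠ 0 := hxne (k+1) k (by omega) (by omega) (by omega) (by omega)
    have hx11 : x (k+1) (k+1) ≠ 0 := hxne (k+1) (k+1) (by omega) (by omega) (by omega) (by omega)
    have e1 : x k (k-1) * a (k-1) k + x k k * a k k + x k (k+1) * a (k+1) k = 1 := by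
      have := colMid k k (by omega) (by omega) (by omega) hkn; simpa using this
    have e2 : x (k+1) (k-1) * a (k-1) k + x (k+1) k * a k k + x (k+1) (k+1) * a (k+1) k = 0 := by
      have := colMid (k+1) k (by omega) (by omega) (by omega) hkn
      rw [if_neg (by omega)] at this
      exact this
    have hqk1 : q k * x k k = x k (k-1) := by
      have := hq k k (by omega) (by omega) le_rfl (by omega)
      rw [this]; field_simp
    have hqk2 : q k * x (k+1) k = x (k+1) (k-1) := by
      have := hq k (k+1) (by omega) (by omega) (by omega) (by omega)
      rw [this]; field_simp
    have hqk3 : q (k+1) * x (k+1) (k+1) = x (k+1) k := by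
      have := hq (k+1) (k+1) (by omega) (by omega) le_rfl (by omega)
      simp only [Nat.add_sub_cancel] at this
      rw [this]; field_simp
    have E1 : x k k * (a k k + a (k-1) k * q k) + x k (k+1) * a (k+1) k = 1 := by
      linear_combination e1 + a (k-1) k * hqk1
    have E2 : x (k+1) k * (a k k + a (k-1) k * q k) + x (k+1) (k+1) * a (k+1) k = 0 := by
      linear_combination e2 + a (k-1) k * hqk2
    have hD : a k k + a (k-1) k * q k ≠ 0 := by
      intro h
      have hz : x (k+1) (k+1) * a (k+1) k = 0 := by
        linear_combination E2 - x (k+1) k * h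
      have ha0 : a (k+1) k = 0 := (mul_eq_zero.mp hz).resolve_left hx11
      have : (1:ℝ) = 0 := by
        linear_combination x k k * h + x k (k+1) * ha0 - E1
      norm_num at this
    refine ⟨hD, ?_⟩
    rw [eq_div_iff hD]
    have h5 : x (k+1) (k+1) * (q (k+1) * (a k k + a (k-1) k * q k) + a (k+1) k) = 0 := by
      linear_combination E2 + (a k k + a (k-1) k * q k) * hqk3
    have := (mul_eq_zero.mp h5).resolve_left hx11
    linarith
  · -- a n n ≠ 0
    have f1 : a n (n-1) * x (n-1) n + a n n * x n n = 1 := by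
      have := rowN n (by omega) le_rfl; simpa using this
    have f2 : a n (n-1) * x (n-1) (n-1) + a n n * x n (n-1) = 0 := by
      have := rowN (n-1) (by omega) (by omega)
      rw [if_neg (by omega)] at this
      exact this
    have hxnn : x (n-1) (n-1) ≠ 0 := hxne (n-1) (n-1) (by omega) (by omega) (by omega) (by omega)
    intro h
    have hz : a n (n-1) * x (n-1) (n-1) = 0 := by
      linear_combination f2 - x n (n-1) * h
    have ha0 : a n (n-1) = 0 := (mul_eq_zero.mp hz).resolve_right hxnn
    have : (1:ℝ) = 0 := by
      linear_combination x (n-1) n * ha0 + x n n * h - f1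
    norm_num at this
  · -- r (n-1)
    have f1 : a n (n-1) * x (n-1) n + a n n * x n n = 1 := by
      have := rowN n (by omega) le_rfl; simpa using this
    have f2 : a n (n-1) * x (n-1) (n-1) + a n n * x n (n-1) = 0 := by
      have := rowN (n-1) (by omega) (by omega)
      rw [if_neg (by omega)] at this
      exact this
    have hxnn : x (n-1) (n-1) ≠ 0 := hxne (n-1) (n-1) (by omega) (by omega) (by omega) (by omega)
    have hann : a n n ≠ 0 := by
      intro h
      have hz : a n (n-1) * x (n-1) (n-1) = 0 := by
        linear_combination f2 - x n (n-1) * h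
      have ha0 : a n (n-1) = 0 := (mul_eq_zero.mp hz).resolve_right hxnn
      have : (1:ℝ) = 0 := by
        linear_combination x (n-1) n * ha0 + x n n * h - f1
      norm_num at this
    have hrn : r (n-1) * x (n-1) (n-1) = x n (n-1) := by
      have := hr (n-1) (n-1) (by omega) le_rfl (by omega) le_rfl
      have e : n - 1 + 1 = n := by omega
      rw [e] at this
      rw [this]; field_simp
    rw [eq_div_iff hann]
    have h5 : x (n-1) (n-1) * (r (n-1) * a n n + a n (n-1)) = 0 := by
      linear_combination f2 + a n n * hrn
    have := (mul_eq_zero.mp h5).resolve_left hxnn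
    linarith
  · -- r middle
    intro k hk1 hkn
    have hxkk : x k k ≠ 0 := hxne k k (by omega) (by omega) (by omega) (by omega)
    have hxk1 : x k (k-1) ≠ 0 := hxne k (k-1) (by omega) (by omega) (by omega) (by omega)
    have hx11 : x (k-1) (k-1) ≠ 0 := hxne (k-1) (k-1) (by omega) (by omega) (by omega) (by omega)
    have g1 : a k (k-1) * x (k-1) k + a k k * x k k + a k (k+1) * x (k+1) k = 1 := by
      have := rowMid k k (by omega) hkn (by omega) (by omega); simpa using this
    have g2 : a k (k-1) * x (k-1) (k-1) + a k k * x k (k-1) + a k (k+1) * x (k+1) (k-1) = 0 := by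
      have := rowMid k (k-1) (by omega) hkn (by omega) (by omega)
      rw [if_neg (by omega)] at this
      exact this
    have hrk1 : r k * x k k = x (k+1) k := by
      have := hr k k (by omega) (by omega) (by omega) le_rfl
      rw [this]; field_simp
    have hrk2 : r k * x k (k-1) = x (k+1) (k-1) := by
      have := hr k (k-1) (by omega) (by omega) (by omega) (by omega)
      rw [this]; field_simp
    have hrk3 : r (k-1) * x (k-1) (k-1) = x k (k-1) := by
      have := hr (k-1) (k-1) (by omega) (by omega) (by omega) le_rfl
      have e : k - 1 + 1 = k := by omega
      rw [e] at this
      rw [this]; field_simp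
    have G1 : a k (k-1) * x (k-1) k + x k k * (a k k + a k (k+1) * r k) = 1 := by
      linear_combination g1 + a k (k+1) * hrk1
    have G2 : a k (k-1) * x (k-1) (k-1) + x k (k-1) * (a k k + a k (k+1) * r k) = 0 := by
      linear_combination g2 + a k (k+1) * hrk2
    have hD : a k k + a k (k+1) * r k ≠ 0 := by
      intro h
      have hz : a k (k-1) * x (k-1) (k-1) = 0 := by
        linear_combination G2 - x k (k-1) * h
      have ha0 : a k (k-1) = 0 := (mul_eq_zero.mp hz).resolve_right hx11
      have : (1:ℝ) = 0 := by
        linear_combination x (k-1) k * ha0 + x k k * h - G1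
      norm_num at this
    refine ⟨hD, ?_⟩
    rw [eq_div_iff hD]
    have h5 : x (k-1) (k-1) * (r (k-1) * (a k k + a k (k+1) * r k) + a k (k-1)) = 0 := by
      linear_combination G2 + (a k k + a k (k+1) * r k) * hrk3
    have := (mul_eq_zero.mp h5).resolve_left hx11
    linarith
end
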